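/- arXiv:2605.19097 — 4 statements merged into one kernel-verified Lean document; each statement's English description precedes it below -/
import Mathlib

section
/- Let S = (G(V,E), (S_e)_{e∈E}) be a strongly connected graph-directed IFS in ℝ^d with all S_e injective contractions, attractor (A_1,…,A_n). Suppose A_i \ Θ(A_i) ≠ ∅ for all i ∈ V, where Θ(A_i) is the union of trivial connected components of A_i. Then A_i \ Θ(A_i) is dense in A_i for all i ∈ V. -/
open Set Metric Topology Function

/-- `IsPathFrom src tgt i j p` : the list of edges `p` is a directed path from `i` to `j`. -/
def IsPathFrom {n : ℕ} {E : Type*} (src tgt : E → Fin n) : Fin n → Fin n → List E → Prop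
  | i, j, [] => i = j
  | i, j, e :: p => src e = i ∧ IsPathFrom src tgt (tgt e) j p

/-- The union of the trivial (one-point) connected components of `A`. -/
def trivialPart {P : Type*} [TopologicalSpace P] (A : Set P) : Set P :=
  {x | x ∈ A ∧ connectedComponentIn A x = {x}}

theorem nontrivialPart_dense
    (d n : ℕ) (E : Type) [Fintype E] (src tgt : E → Fin n)
    (S : E → EuclideanSpace ℝ (Fin d) → EuclideanSpace ℝ (Fin d))
    (hout : ∀ i : Fin n, ∃ e : E, src e = i)
    (hinj : ∀ e, Function.Injective (S e))
    (hcontr : ∀ e : E, ∃ r : NNReal, r < 1 ∧ LipschitzWith r (S e))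
    (hsc : ∀ i j : Fin n, ∃ p : List E, p ≠ [] ∧ IsPathFrom src tgt i j p)
    -- the attractor
    (A : Fin n → Set (EuclideanSpace ℝ (Fin d)))
    (hAcp : ∀ i, IsCompact (A i)) (hAne : ∀ i, (A i).Nonempty)
    (hattr : ∀ i, A i = ⋃ (e : E) (_ : src e = i), S e '' A (tgt e))
    (hne : ∀ i, (A i \ trivialPart (A i)).Nonempty) :
    ∀ i, A i ⊆ closure (A i \ trivialPart (A i)) := by
  classical
  choose ρ hρ1 hρL using hcontr
  intro i x hx
  set r : NNReal := Finset.univ.sup ρ with hrdef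
  have hrlt' : r < 1 := by
    refine Finset.sup_lt_iff ?_ |>.mpr fun e _ => hρ1 e
    simp
  have hrlt : (r : ℝ) < 1 := by exact_mod_cast hrlt'
  have hLip : ∀ e, LipschitzWith r (S e) := fun e =>
    (hρL e).weaken (Finset.le_sup (Finset.mem_univ e))
  -- uniform diameter bound
  obtain ⟨D, hD0, hD⟩ : ∃ D, 0 ≤ D ∧ ∀ j, ∀ a ∈ A j, ∀ b ∈ A j, dist a b ≤ D := by
    refine ⟨Finset.univ.sup' ⟨i, Finset.mem_univ i⟩ fun j => Metric.diam (A j),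
      le_trans (Metric.diam_nonneg (s := A i)) (Finset.le_sup' (fun j => Metric.diam (A j)) (Finset.mem_univ i)), ?_⟩
    intro j a ha b hb
    exact le_trans (Metric.dist_le_diam_of_mem (hAcp j).isBounded ha hb)
      (Finset.le_sup' (fun j => Metric.diam (A j)) (Finset.mem_univ j))
  have himg : ∀ e, S e '' A (tgt e) ⊆ A (src e) := by
    intro e y hy
    rw [hattr (src e)]
    exact mem_iUnion₂.mpr ⟨e, rfl, hy⟩
  -- key lemma: S e preserves non-trivially-connected points
  have hkey : ∀ e z, z ∈ A (tgt e) \ trivialPart (A (tgt e)) →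
      S e z ∈ A (src e) \ trivialPart (A (src e)) := by
    intro e z ⟨hzA, hzT⟩
    refine ⟨himg e ⟨z, hzA, rfl⟩, ?_⟩
    rintro ⟨-, hcomp⟩
    apply hzT
    refine ⟨hzA, ?_⟩
    have h1 : S e '' connectedComponentIn (A (tgt e)) z ⊆
        connectedComponentIn (A (src e)) (S e z) := by
      apply IsPreconnected.subset_connectedComponentIn
      · exact (isPreconnected_connectedComponentIn).image _
          ((hLip e).continuous.continuousOn)
      · exact ⟨z, mem_connectedComponentIn hzA, rfl⟩
      · exact (image_mono (f := S e) (connectedComponentIn_subset _ _)).trans (himg e)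
    rw [hcomp] at h1
    apply Subset.antisymm
    · intro w hw
      have : S e w ∈ ({S e z} : Set _) := h1 ⟨w, hw, rfl⟩
      exact hinj e (by simpa using this)
    · exact singleton_subset_iff.mpr (mem_connectedComponentIn hzA)
  -- main induction: approximation at scale r^m * D
  have main : ∀ m : ℕ, ∀ j, ∀ x ∈ A j,
      ∃ y ∈ A j \ trivialPart (A j), dist x y ≤ (r : ℝ) ^ m * D := by
    intro m
    induction m with
    | zero =>
      intro j x hx
      obtain ⟨y, hy⟩ := hne j
      exact ⟨y, hy, by simpa using hD j x hx y hy.1⟩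
    | succ m ih =>
      intro j x hx
      rw [hattr j] at hx
      simp only [mem_iUnion] at hx
      obtain ⟨e, he, x', hx', rfl⟩ := hx
      obtain ⟨y', hy', hd⟩ := ih (tgt e) x' hx'
      subst he
      refine ⟨S e y', hkey e y' hy', ?_⟩
      calc dist (S e x') (S e y') ≤ r * dist x' y' := (hLip e).dist_le_mul x' y'
        _ ≤ r * ((r : ℝ) ^ m * D) :=
            mul_le_mul_of_nonneg_left hd r.coe_nonneg
        _ = (r : ℝ) ^ (m + 1) * D := by ring
  rw [Metric.mem_closure_iff]
  intro ε hε
  have htend : Filter.Tendsto (fun m : ℕ => (r : ℝ) ^ m * D) Filter.atTop (nhds 0) := by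
    simpa using (tendsto_pow_atTop_nhds_zero_of_lt_one r.coe_nonneg hrlt).mul_const D
  obtain ⟨m, hm⟩ := (htend.eventually (gt_mem_nhds hε)).exists
  obtain ⟨y, hy, hd⟩ := main m i x hx
  exact ⟨y, hy, hd.trans_lt hm⟩
end

section
/- Let (A_1,…,A_n) be the attractor of a strongly connected graph-directed IFS S = (G(V,E), (S_e)_{e∈E}) in ℝ^d where every S_e is a bi-Lipschitz contraction, and suppose S satisfies the OSC with open sets (U_1,…,U_n) and dim_H(A_i) > 0 for all i ∈ V. Then for every i ∈ V: dim_H(A_i ∩ U_i) = dim_H(A_i) if and only if A_i ∩ U_i ≠ ∅. -/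
open Set Metric Topology Function

theorem dimH_inter_openSet_eq_iff
    (d n : ℕ) (E : Type) [Fintype E] (src tgt : E → Fin n)
    (S : E → EuclideanSpace ℝ (Fin d) → EuclideanSpace ℝ (Fin d))
    (hout : ∀ i : Fin n, ∃ e : E, src e = i)
    -- each `S e` is a bi-Lipschitz contraction
    (hbiLip : ∀ e : E, ∃ l r : NNReal, 0 < l ∧ r < 1 ∧
      AntilipschitzWith l⁻¹ (S e) ∧ LipschitzWith r (S e))
    (hsc : ∀ i j : Fin n, ∃ p : List E, p ≠ [] ∧ IsPathFrom src tgt i j p)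
    -- the open set condition with open sets `U`
    (U : Fin n → Set (EuclideanSpace ℝ (Fin d)))
    (hUne : ∀ k, (U k).Nonempty) (hUopen : ∀ k, IsOpen (U k))
    (hUbdd : ∀ k, Bornology.IsBounded (U k))
    (hUsub : ∀ i, (⋃ (e : E) (_ : src e = i), S e '' U (tgt e)) ⊆ U i)
    (hUdisj : ∀ e e' : E, src e = src e' → e ≠ e' →
      Disjoint (S e '' U (tgt e)) (S e' '' U (tgt e')))
    -- the attractor
    (A : Fin n → Set (EuclideanSpace ℝ (Fin d)))
    (hAcp : ∀ i, IsCompact (A i)) (hAne : ∀ i, (A i).Nonempty)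
    (hattr : ∀ i, A i = ⋃ (e : E) (_ : src e = i), S e '' A (tgt e))
    (hdim : ∀ i, 0 < dimH (A i)) :
    ∀ i : Fin n, dimH (A i ∩ U i) = dimH (A i) ↔ (A i ∩ U i).Nonempty := by
  -- choose Lipschitz constants
  choose l r hl hr hal hlip using hbiLip
  -- the image of an attractor piece under each edge map sits inside the source piece
  have hsubA : ∀ e : E, S e '' A (tgt e) ⊆ A (src e) := by
    intro e x hx
    rw [hattr (src e)]
    exact mem_iUnion₂.2 ⟨e, rfl, hx⟩
  -- dimension is constant over the strongly connected graph
  have hpath : ∀ (p : List E) (i j : Fin n), IsPathFrom src tgt i j p →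
      dimH (A j) ≤ dimH (A i) := by
    intro p
    induction p with
    | nil => intro i j h; cases h; rfl
    | cons e q ih =>
      intro i j h
      obtain ⟨he, hq⟩ := h
      calc dimH (A j) ≤ dimH (A (tgt e)) := ih _ _ hq
        _ ≤ dimH (S e '' A (tgt e)) := (hal e).le_dimH_image _
        _ ≤ dimH (A i) := by
            refine dimH_mono ?_
            rw [← he]; exact hsubA e
  have hdimeq : ∀ i j : Fin n, dimH (A i) = dimH (A j) := by
    intro i j
    obtain ⟨p, -, hp⟩ := hsc i j
    obtain ⟨q, -, hq⟩ := hsc j i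
    exact le_antisymm (hpath q j i hq) (hpath p i j hp)
  -- maximal contraction ratio and maximal diameter
  set rmax : NNReal := Finset.univ.sup r with hrmax
  have hrmax1 : rmax < 1 := (Finset.sup_lt_iff (by norm_num : (⊥ : NNReal) < 1)).2 fun e _ => hr e
  set D : ENNReal := Finset.univ.sup (fun k => EMetric.diam (A k)) with hD
  have hDlt : D < ⊤ :=
    (Finset.sup_lt_iff (by simp : (⊥ : ENNReal) < ⊤)).2 fun k _ =>
      ((hAcp k).isBounded).ediam_ne_top.lt_top
  -- key shrinking lemma: near any point of `A i` there are small pieces of full dimension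
  have key : ∀ (m : ℕ) (i : Fin n), ∀ x ∈ A i, ∃ T : Set (EuclideanSpace ℝ (Fin d)),
      T ⊆ A i ∧ x ∈ T ∧ EMetric.diam T ≤ (rmax : ENNReal) ^ m * D ∧
      dimH (A i) ≤ dimH T := by
    intro m
    induction m with
    | zero =>
      intro i x hx
      refine ⟨A i, Subset.rfl, hx, ?_, le_rfl⟩
      simp only [pow_zero, one_mul, hD]
      exact Finset.le_sup (f := fun k => EMetric.diam (A k)) (Finset.mem_univ i)
    | succ m ih =>
      intro i x hx
      rw [hattr i] at hx
      obtain ⟨e, he, y, hy, hxy⟩ := by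
        simpa only [mem_iUnion, mem_image, exists_prop] using hx
      obtain ⟨T', hT'A, hyT', hT'd, hT'dim⟩ := ih (tgt e) y hy
      refine ⟨S e '' T', ?_, ⟨y, hyT', hxy⟩, ?_, ?_⟩
      · intro z hz
        have : z ∈ S e '' A (tgt e) := image_mono hT'A hz
        exact he ▸ hsubA e this
      · calc EMetric.diam (S e '' T') ≤ (r e : ENNReal) * EMetric.diam T' :=
              (hlip e).ediam_image_le T'
          _ ≤ (rmax : ENNReal) * ((rmax : ENNReal) ^ m * D) := by
              refine mul_le_mul' ?_ hT'd
              exact_mod_cast Finset.le_sup (Finset.mem_univ e)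
          _ = (rmax : ENNReal) ^ (m + 1) * D := by ring
      · calc dimH (A i) = dimH (A (tgt e)) := hdimeq i (tgt e)
          _ ≤ dimH T' := hT'dim
          _ ≤ dimH (S e '' T') := (hal e).le_dimH_image T'
  intro i
  constructor
  · intro h
    by_contra hne
    rw [not_nonempty_iff_eq_empty] at hne
    rw [hne, dimH_empty] at h
    exact (hdim i).ne' h.symm
  · rintro ⟨x₀, hx₀A, hx₀U⟩
    refine le_antisymm (dimH_mono inter_subset_left) ?_
    obtain ⟨δ, hδ, hball⟩ := Metric.isOpen_iff.1 (hUopen i) x₀ hx₀U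
    -- pick `m` with `rmax ^ m * D < ofReal δ`
    have htend : Filter.Tendsto (fun m : ℕ => (rmax : ENNReal) ^ m * D)
        Filter.atTop (nhds 0) := by
      have := ENNReal.tendsto_pow_atTop_nhds_zero_of_lt_one
        (r := (rmax : ENNReal)) (by exact_mod_cast hrmax1)
      simpa using ENNReal.Tendsto.mul_const this (Or.inr hDlt.ne)
    have hpos : (0 : ENNReal) < ENNReal.ofReal δ := ENNReal.ofReal_pos.2 hδ
    obtain ⟨m, hm⟩ := (htend.eventually_lt_const hpos).exists
    obtain ⟨T, hTA, hxT, hTd, hTdim⟩ := key m i x₀ hx₀A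
    have hTsub : T ⊆ A i ∩ U i := by
      intro z hz
      refine ⟨hTA hz, hball ?_⟩
      rw [Metric.mem_ball, dist_comm, ← ENNReal.ofReal_lt_ofReal_iff hδ,
        ← edist_dist]
      exact lt_of_le_of_lt (EMetric.edist_le_diam_of_mem hxT hz)
        (lt_of_le_of_lt hTd hm)
    calc dimH (A i) ≤ dimH T := hTdim
      _ ≤ dimH (A i ∩ U i) := dimH_mono hTsub
end

section
/- Let (A_1,…,A_n) and (B_1,…,B_n) be the attractors of two GDIFSs S = (G(V,E), (S_e)) and T = (G(V,E), (f_e)) on the same directed graph, all maps bi-Lipschitz contractions, both systems satisfying the SSC, and S satisfying the bounded distortion property with constant K. If for every finite admissible path w the composed maps satisfy Lip⁻(S_w) = Lip⁻(f_w) and Lip⁺(S_w) = Lip⁺(f_w), then A_i and B_i are bi-Lipschitz equivalent for each i ∈ V, via the address-preserving bijection Φ, with bi-Lipschitz constants K^{-1}D_2(max_i diam A_i)^{-1} and K D_1^{-1} max_i diam B_i, where D_1, D_2 are the minimal gaps between distinct cylinder pieces of the two systems. -/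
open Set Metric Topology Function

set_option linter.unusedSectionVars false
set_option maxHeartbeats 1000000

/-- Upper Lipschitz constant `Lip⁺(f) = sup_{x ≠ y} d(f x, f y)/d(x,y)`. -/
noncomputable def lipUpper {P : Type*} [PseudoMetricSpace P] (f : P → P) : ℝ :=
  sSup {c | ∃ x y : P, x ≠ y ∧ c = dist (f x) (f y) / dist x y}

/-- Lower Lipschitz constant `Lip⁻(f) = inf_{x ≠ y} d(f x, f y)/d(x,y)`. -/
noncomputable def lipLower {P : Type*} [PseudoMetricSpace P] (f : P → P) : ℝ :=
  sInf {c | ∃ x y : P, x ≠ y ∧ c = dist (f x) (f y) / dist x y}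

/-- The composition `S_{e_1} ∘ ⋯ ∘ S_{e_p}` along a finite path. -/
def pathMap {E P : Type*} (S : E → P → P) : List E → P → P
  | [] => id
  | e :: p => S e ∘ pathMap S p

/-- `compMap S e m = S (e 0) ∘ S (e 1) ∘ ⋯ ∘ S (e m)`. -/
def compMap {E P : Type*} (S : E → P → P) (e : ℕ → E) : ℕ → P → P
  | 0 => S (e 0)
  | m + 1 => compMap S e m ∘ S (e (m + 1))

/-- Distance between two sets. -/
noncomputable def setDist {P : Type*} [PseudoMetricSpace P] (X Y : Set P) : ℝ :=
  sInf (Set.image2 dist X Y)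

/-- The minimal gap between distinct first-level pieces of a graph-directed system. -/
noncomputable def minGap {n : ℕ} {E P : Type*} [PseudoMetricSpace P]
    (S : E → P → P) (A : Fin n → Set P) (src tgt : E → Fin n) : ℝ :=
  sInf {D | ∃ e e' : E, src e = src e' ∧ e ≠ e' ∧
    D = setDist (S e '' A (tgt e)) (S e' '' A (tgt e'))}

/-- The maximal diameter of the components of an attractor. -/
noncomputable def maxDiam {n : ℕ} {P : Type*} [PseudoMetricSpace P]
    (A : Fin n → Set P) : ℝ :=
  ⨆ i : Fin n, Metric.diam (A i)

section AuxLemmas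

variable {n : ℕ} {E : Type*} {P : Type*} [MetricSpace P]

theorem pathMap_append (S : E → P → P) (u v : List E) :
    pathMap S (u ++ v) = pathMap S u ∘ pathMap S v := by
  induction u with
  | nil => rfl
  | cons e p ih =>
    show S e ∘ pathMap S (p ++ v) = (S e ∘ pathMap S p) ∘ pathMap S v
    rw [ih, Function.comp_assoc]

theorem pathMap_singleton (S : E → P → P) (e : E) : pathMap S [e] = S e := rfl

theorem compMap_eq_pathMap (S : E → P → P) (e : ℕ → E) (m : ℕ) :
    compMap S e m = pathMap S ((List.range (m+1)).map e) := by
  induction m with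
  | zero => rfl
  | succ m ih =>
    rw [List.range_succ, List.map_append, pathMap_append, ← ih]
    rfl

theorem isPathFrom_append {src tgt : E → Fin n} {i j k : Fin n} {u v : List E}
    (hu : IsPathFrom src tgt i j u) (hv : IsPathFrom src tgt j k v) :
    IsPathFrom src tgt i k (u ++ v) := by
  induction u generalizing i with
  | nil => exact hu ▸ hv
  | cons e p ih => exact ⟨hu.1, ih hu.2⟩

theorem isPathFrom_prefix {src tgt : E → Fin n} {e : ℕ → E} {i : Fin n}
    (h0 : src (e 0) = i) (hadm : ∀ m, src (e (m+1)) = tgt (e m)) (m : ℕ) :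
    IsPathFrom src tgt i (tgt (e m)) ((List.range (m+1)).map e) := by
  induction m with
  | zero => exact ⟨h0, rfl⟩
  | succ m ih =>
    rw [List.range_succ, List.map_append]
    exact isPathFrom_append ih ⟨hadm m, rfl⟩

variable (S : E → P → P) (A : Fin n → Set P) (src tgt : E → Fin n)

theorem piece_subset (hA : ∀ i, A i = ⋃ (e) (_ : src e = i), S e '' A (tgt e)) (e : E) :
    S e '' A (tgt e) ⊆ A (src e) := by
  rw [hA (src e)]
  intro z hz
  exact Set.mem_iUnion.2 ⟨e, Set.mem_iUnion.2 ⟨rfl, hz⟩⟩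

theorem pathMap_image_subset (hA : ∀ i, A i = ⋃ (e) (_ : src e = i), S e '' A (tgt e))
    {i j : Fin n} {w : List E} (hw : IsPathFrom src tgt i j w) :
    pathMap S w '' A j ⊆ A i := by
  induction w generalizing i with
  | nil => cases hw; simp [pathMap]
  | cons e p ih =>
    calc pathMap S (e :: p) '' A j = S e '' (pathMap S p '' A j) := Set.image_comp _ _ _
    _ ⊆ S e '' A (tgt e) := Set.image_mono (ih hw.2)
    _ ⊆ A (src e) := piece_subset S A src tgt hA e
    _ = A i := by rw [hw.1]

theorem path_unique (hA : ∀ i, A i = ⋃ (e) (_ : src e = i), S e '' A (tgt e))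
    (hssc : ∀ e e' : E, src e = src e' → e ≠ e' →
      Disjoint (S e '' A (tgt e)) (S e' '' A (tgt e')))
    (hinj : ∀ e : E, Function.Injective (S e)) :
    ∀ (w w' : List E) (i j j' : Fin n) (x : P), w.length = w'.length →
    IsPathFrom src tgt i j w → IsPathFrom src tgt i j' w' →
    x ∈ pathMap S w '' A j → x ∈ pathMap S w' '' A j' → w = w' := by
  intro w
  induction w with
  | nil =>
    intro w' _ _ _ _ hlen _ _ _ _
    cases w' with
    | nil => rfl
    | cons _ _ => simp at hlen
  | cons e p ih =>
    intro w' i j j' x hlen hp hp' hx hx'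
    cases w' with
    | nil => simp at hlen
    | cons e' p' =>
      rw [show pathMap S (e :: p) = S e ∘ pathMap S p from rfl, Set.image_comp] at hx
      rw [show pathMap S (e' :: p') = S e' ∘ pathMap S p' from rfl, Set.image_comp] at hx'
      obtain ⟨y, hy, hxy⟩ := hx
      obtain ⟨y', hy', hxy'⟩ := hx'
      have hyA : y ∈ A (tgt e) := pathMap_image_subset S A src tgt hA hp.2 hy
      have hy'A : y' ∈ A (tgt e') := pathMap_image_subset S A src tgt hA hp'.2 hy'
      have hee : e = e' := by
        by_contra hne
        exact (hssc e e' (hp.1.trans hp'.1.symm) hne).ne_of_mem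
          ⟨y, hyA, hxy⟩ ⟨y', hy'A, hxy'⟩ rfl
      subst hee
      have hyy : y' = y := hinj e (hxy'.trans hxy.symm)
      rw [ih p' (tgt e) j j' y (by simpa using hlen) hp.2 hp'.2 hy (hyy ▸ hy')]

theorem exists_address (hA : ∀ i, A i = ⋃ (e) (_ : src e = i), S e '' A (tgt e))
    {i : Fin n} {x : P} (hx : x ∈ A i) :
    ∃ e : ℕ → E, src (e 0) = i ∧ (∀ m, src (e (m+1)) = tgt (e m)) ∧
      ∀ m, x ∈ compMap S e m '' A (tgt (e m)) := by
  have step : ∀ (j : Fin n) (y : P), y ∈ A j →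
      ∃ (e : E) (z : P), src e = j ∧ z ∈ A (tgt e) ∧ S e z = y := by
    intro j y hy
    rw [hA j] at hy
    simp only [Set.mem_iUnion, Set.mem_image] at hy
    obtain ⟨e, he, z, hz, hzy⟩ := hy
    exact ⟨e, z, he, hz, hzy⟩
  have next : ∀ t : Σ' (e : E) (z : P), z ∈ A (tgt e),
      ∃ t' : Σ' (e : E) (z : P), z ∈ A (tgt e), src t'.1 = tgt t.1 ∧ S t'.1 t'.2.1 = t.2.1 := by
    intro t
    obtain ⟨e', z', h1, h2, h3⟩ := step (tgt t.1) t.2.1 t.2.2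
    exact ⟨⟨e', z', h2⟩, h1, h3⟩
  obtain ⟨e0, z0, h01, h02, h03⟩ := step i x hx
  let g : ℕ → Σ' (e : E) (z : P), z ∈ A (tgt e) :=
    fun m => Nat.rec ⟨e0, z0, h02⟩ (fun _ t => Classical.choose (next t)) m
  refine ⟨fun m => (g m).1, h01, ?_, ?_⟩
  · intro m
    exact (Classical.choose_spec (next (g m))).1
  · have hrel : ∀ m, S ((g (m+1)).1) ((g (m+1)).2.1) = (g m).2.1 :=
      fun m => (Classical.choose_spec (next (g m))).2
    have hcomp : ∀ m, compMap S (fun k => (g k).1) m ((g m).2.1) = x := by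
      intro m
      induction m with
      | zero => exact h03
      | succ m ihm =>
        show compMap S (fun k => (g k).1) m (S ((g (m+1)).1) ((g (m+1)).2.1)) = x
        rw [hrel m]; exact ihm
    exact fun m => ⟨(g m).2.1, (g m).2.2, hcomp m⟩

theorem address_unique (hA : ∀ i, A i = ⋃ (e) (_ : src e = i), S e '' A (tgt e))
    (hssc : ∀ e e' : E, src e = src e' → e ≠ e' →
      Disjoint (S e '' A (tgt e)) (S e' '' A (tgt e')))
    (hinj : ∀ e : E, Function.Injective (S e))
    {i : Fin n} {x : P} {e e' : ℕ → E}
    (h0 : src (e 0) = i) (hadm : ∀ m, src (e (m+1)) = tgt (e m))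
    (hmem : ∀ m, x ∈ compMap S e m '' A (tgt (e m)))
    (h0' : src (e' 0) = i) (hadm' : ∀ m, src (e' (m+1)) = tgt (e' m))
    (hmem' : ∀ m, x ∈ compMap S e' m '' A (tgt (e' m))) : e = e' := by
  funext m
  have h1 := hmem m
  have h2 := hmem' m
  rw [compMap_eq_pathMap] at h1 h2
  have hl := path_unique S A src tgt hA hssc hinj _ _ i (tgt (e m)) (tgt (e' m)) x
    (by simp) (isPathFrom_prefix h0 hadm m) (isPathFrom_prefix h0' hadm' m) h1 h2
  have hm : m < ((List.range (m+1)).map e).length := by simp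
  have h3 := List.getElem_of_eq hl hm
  simpa using h3

theorem pathMap_lipschitz (hS : ∀ e, ∃ r : NNReal, LipschitzWith r (S e)) :
    ∀ w : List E, ∃ r : NNReal, LipschitzWith r (pathMap S w)
  | [] => ⟨1, LipschitzWith.id⟩
  | e :: p => by
    obtain ⟨r1, h1⟩ := hS e
    obtain ⟨r2, h2⟩ := pathMap_lipschitz hS p
    exact ⟨r1 * r2, h1.comp h2⟩

theorem pathMap_antilip (hS : ∀ e, ∃ l : NNReal, 0 < l ∧ AntilipschitzWith l⁻¹ (S e)) :
    ∀ w : List E, ∃ l : NNReal, 0 < l ∧ AntilipschitzWith l⁻¹ (pathMap S w)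
  | [] => ⟨1, one_pos, by simpa [pathMap] using (AntilipschitzWith.id (α := P))⟩
  | e :: p => by
    obtain ⟨l1, hl1, h1⟩ := hS e
    obtain ⟨l2, hl2, h2⟩ := pathMap_antilip hS p
    refine ⟨l1 * l2, mul_pos hl1 hl2, ?_⟩
    have := h1.comp h2
    rwa [show l2⁻¹ * l1⁻¹ = (l1 * l2)⁻¹ by rw [mul_inv, mul_comm]] at this

theorem compMap_lipschitz {ρ : NNReal} (hS : ∀ e, LipschitzWith ρ (S e))
    (e : ℕ → E) : ∀ m, LipschitzWith (ρ ^ (m + 1)) (compMap S e m)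
  | 0 => by simpa [compMap] using hS (e 0)
  | m + 1 => by
    have := (compMap_lipschitz hS e m).comp (hS (e (m + 1)))
    rwa [show ρ ^ (m + 1) * ρ = ρ ^ (m + 1 + 1) by ring] at this

theorem setDist_nonneg {X Y : Set P} : 0 ≤ setDist X Y := by
  apply Real.sInf_nonneg
  rintro z ⟨p, hp, q, hq, rfl⟩
  exact dist_nonneg

theorem setDist_le_dist {X Y : Set P} {a b : P} (ha : a ∈ X) (hb : b ∈ Y) :
    setDist X Y ≤ dist a b := by
  apply csInf_le ⟨0, ?_⟩ (Set.mem_image2_of_mem ha hb)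
  rintro z ⟨p, hp, q, hq, rfl⟩
  exact dist_nonneg

theorem setDist_pos {X Y : Set P} (hX : IsCompact X) (hY : IsCompact Y)
    (hXne : X.Nonempty) (hYne : Y.Nonempty) (hdisj : Disjoint X Y) :
    0 < setDist X Y := by
  obtain ⟨⟨a, b⟩, hab, hmin⟩ := (hX.prod hY).exists_isMinOn (hXne.prod hYne)
    (continuous_dist.continuousOn (s := X ×ˢ Y))
  have hpos : 0 < dist a b := dist_pos.2 (hdisj.ne_of_mem hab.1 hab.2)
  refine lt_of_lt_of_le hpos (le_csInf (hXne.image2 hYne) ?_)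
  rintro z ⟨p, hp, q, hq, rfl⟩
  exact hmin (Set.mk_mem_prod hp hq)

theorem diam_le_maxDiam (j : Fin n) : Metric.diam (A j) ≤ maxDiam A :=
  le_ciSup (f := fun i => Metric.diam (A i)) (Set.Finite.bddAbove (Set.finite_range _)) j

theorem maxDiam_nonneg : 0 ≤ maxDiam A :=
  Real.iSup_nonneg fun _ => diam_nonneg

theorem dist_le_maxDiam (hAcp : ∀ i, IsCompact (A i)) {j : Fin n}
    {a b : P} (ha : a ∈ A j) (hb : b ∈ A j) : dist a b ≤ maxDiam A :=
  le_trans (dist_le_diam_of_mem (hAcp j).isBounded ha hb) (diam_le_maxDiam A j)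

theorem minGap_nonneg : 0 ≤ minGap S A src tgt := by
  apply Real.sInf_nonneg
  rintro z ⟨a, b, _, _, rfl⟩
  exact setDist_nonneg

theorem minGap_le {e e' : E} (h : src e = src e') (hne : e ≠ e') :
    minGap S A src tgt ≤ setDist (S e '' A (tgt e)) (S e' '' A (tgt e')) := by
  rw [minGap]
  refine csInf_le ⟨0, ?_⟩ ⟨e, e', h, hne, rfl⟩
  rintro z ⟨a, b, _, _, rfl⟩
  exact setDist_nonneg

theorem minGap_pos [Fintype E]
    (hcp : ∀ e : E, IsCompact (S e '' A (tgt e))) (hne : ∀ e : E, (S e '' A (tgt e)).Nonempty)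
    (hssc : ∀ e e' : E, src e = src e' → e ≠ e' →
      Disjoint (S e '' A (tgt e)) (S e' '' A (tgt e')))
    (hpair : ∃ e e' : E, src e = src e' ∧ e ≠ e') :
    0 < minGap S A src tgt := by
  have hfin : {D | ∃ e e' : E, src e = src e' ∧ e ≠ e' ∧
      D = setDist (S e '' A (tgt e)) (S e' '' A (tgt e'))}.Finite := by
    have hsub : {D | ∃ e e' : E, src e = src e' ∧ e ≠ e' ∧
        D = setDist (S e '' A (tgt e)) (S e' '' A (tgt e'))} ⊆
        (fun p : E × E => setDist (S p.1 '' A (tgt p.1)) (S p.2 '' A (tgt p.2))) '' Set.univ := by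
      rintro D ⟨e, e', _, _, rfl⟩
      exact ⟨(e, e'), Set.mem_univ _, rfl⟩
    exact Set.Finite.subset (Set.toFinite _) hsub
  obtain ⟨e0, e0', h1, h2⟩ := hpair
  have hne' : {D | ∃ e e' : E, src e = src e' ∧ e ≠ e' ∧
      D = setDist (S e '' A (tgt e)) (S e' '' A (tgt e'))}.Nonempty := ⟨_, e0, e0', h1, h2, rfl⟩
  obtain ⟨e, e', he, hee, heq⟩ := hne'.csInf_mem hfin
  rw [minGap, heq]
  exact setDist_pos (hcp e) (hcp e') (hne e) (hne e') (hssc e e' he hee)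

theorem address_point (hB : ∀ i, A i = ⋃ (e) (_ : src e = i), S e '' A (tgt e))
    (hcp : ∀ i, IsCompact (A i)) (hane : ∀ i, (A i).Nonempty)
    {ρ : NNReal} (hρ : ρ < 1) (hlip : ∀ e, LipschitzWith ρ (S e))
    {e : ℕ → E} (hadm : ∀ m, src (e (m+1)) = tgt (e m)) :
    ∃! y : P, ∀ m, y ∈ compMap S e m '' A (tgt (e m)) := by
  have hnest : ∀ m, compMap S e (m+1) '' A (tgt (e (m+1))) ⊆ compMap S e m '' A (tgt (e m)) := by
    intro m
    rw [show compMap S e (m+1) = compMap S e m ∘ S (e (m+1)) from rfl, Set.image_comp]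
    apply Set.image_mono
    rw [← hadm m]
    exact piece_subset S A src tgt hB (e (m+1))
  have hC : ∀ m, IsCompact (compMap S e m '' A (tgt (e m))) :=
    fun m => ((hcp _).image (compMap_lipschitz S hlip e m).continuous)
  have hCne : ∀ m, (compMap S e m '' A (tgt (e m))).Nonempty := fun m => (hane _).image _
  obtain ⟨y, hy⟩ := IsCompact.nonempty_iInter_of_sequence_nonempty_isCompact_isClosed
    _ hnest hCne (hC 0) (fun m => (hC m).isClosed)
  simp only [Set.mem_iInter] at hy
  refine ⟨y, hy, ?_⟩
  intro y' hy'
  have hdd : ∀ m : ℕ, dist y' y ≤ (ρ:ℝ) ^ (m+1) * maxDiam A := by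
    intro m
    obtain ⟨a, ha, hay⟩ := hy' m
    obtain ⟨b, hb, hby⟩ := hy m
    rw [← hay, ← hby]
    calc dist (compMap S e m a) (compMap S e m b) ≤ (ρ^(m+1) : NNReal) * dist a b :=
      (compMap_lipschitz S hlip e m).dist_le_mul a b
    _ ≤ (ρ:ℝ)^(m+1) * maxDiam A := by
        push_cast
        exact mul_le_mul_of_nonneg_left
          (dist_le_maxDiam A hcp ha hb) (by positivity)
  have htend : Filter.Tendsto (fun m : ℕ => (ρ:ℝ) ^ (m+1) * maxDiam A) Filter.atTop (nhds 0) := by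
    have h1 : Filter.Tendsto (fun m : ℕ => (ρ:ℝ) ^ m) Filter.atTop (nhds 0) :=
      tendsto_pow_atTop_nhds_zero_of_lt_one ρ.2 hρ
    have h2 := (h1.comp (Filter.tendsto_add_atTop_nat 1)).mul_const (maxDiam A)
    simpa using h2
  have hle : dist y' y ≤ 0 := ge_of_tendsto' htend hdd
  exact dist_eq_zero.1 (le_antisymm hle dist_nonneg)

end AuxLemmas

section LipLemmas

variable {P : Type*} [MetricSpace P] {g : P → P}

theorem ratio_nonneg : ∀ c ∈ {c | ∃ x y : P, x ≠ y ∧ c = dist (g x) (g y) / dist x y}, 0 ≤ c := by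
  rintro c ⟨x, y, hxy, rfl⟩; positivity

theorem lipUpper_nonneg : 0 ≤ lipUpper g := Real.sSup_nonneg ratio_nonneg

theorem lipLower_nonneg : 0 ≤ lipLower g := Real.sInf_nonneg ratio_nonneg

theorem ratio_bddAbove {c : NNReal} (hg : LipschitzWith c g) :
    BddAbove {c | ∃ x y : P, x ≠ y ∧ c = dist (g x) (g y) / dist x y} := by
  refine ⟨c, ?_⟩
  rintro z ⟨a, b, hab, rfl⟩
  rw [div_le_iff₀ (dist_pos.2 hab)]
  exact hg.dist_le_mul a b

theorem dist_le_lipUpper_mul {c : NNReal} (hg : LipschitzWith c g) (x y : P) :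
    dist (g x) (g y) ≤ lipUpper g * dist x y := by
  rcases eq_or_ne x y with rfl | h
  · simp
  · have hd : 0 < dist x y := dist_pos.2 h
    have hle : dist (g x) (g y) / dist x y ≤ lipUpper g :=
      le_csSup (ratio_bddAbove hg) ⟨x, y, h, rfl⟩
    calc dist (g x) (g y) = dist (g x) (g y) / dist x y * dist x y := by field_simp
    _ ≤ lipUpper g * dist x y := mul_le_mul_of_nonneg_right hle hd.le

theorem lipLower_mul_le (x y : P) :
    lipLower g * dist x y ≤ dist (g x) (g y) := by
  rcases eq_or_ne x y with rfl | h
  · simp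
  · have hd : 0 < dist x y := dist_pos.2 h
    have hle : lipLower g ≤ dist (g x) (g y) / dist x y :=
      csInf_le ⟨0, ratio_nonneg⟩ ⟨x, y, h, rfl⟩
    calc lipLower g * dist x y ≤ dist (g x) (g y) / dist x y * dist x y :=
      mul_le_mul_of_nonneg_right hle hd.le
    _ = dist (g x) (g y) := by field_simp

theorem le_lipLower [Nontrivial P] {l : NNReal} (hl : 0 < l)
    (hg : AntilipschitzWith l⁻¹ g) : (l : ℝ) ≤ lipLower g := by
  obtain ⟨x0, y0, hxy0⟩ := exists_pair_ne P
  refine le_csInf ⟨_, x0, y0, hxy0, rfl⟩ ?_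
  rintro z ⟨a, b, hab, rfl⟩
  rw [le_div_iff₀ (dist_pos.2 hab)]
  have h1 := hg.le_mul_dist a b
  rw [NNReal.coe_inv] at h1
  have hl' : (0:ℝ) < l := hl
  have h2 := mul_le_mul_of_nonneg_left h1 hl'.le
  rw [← mul_assoc, mul_inv_cancel₀ hl'.ne', one_mul] at h2
  linarith

theorem lipLower_le_lipUpper [Nontrivial P] {c : NNReal} (hg : LipschitzWith c g) :
    lipLower g ≤ lipUpper g := by
  obtain ⟨x0, y0, hxy0⟩ := exists_pair_ne P
  exact csInf_le_csSup ⟨_, x0, y0, hxy0, rfl⟩ ⟨0, ratio_nonneg⟩ (ratio_bddAbove hg)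

theorem lipUpper_id [Nontrivial P] : lipUpper (id : P → P) = 1 := by
  have h : {c | ∃ x y : P, x ≠ y ∧ c = dist (id x) (id y) / dist x y} = {1} := by
    ext c
    constructor
    · rintro ⟨x, y, hxy, rfl⟩
      simp [div_self (dist_pos.2 hxy).ne']
    · rintro rfl
      obtain ⟨x0, y0, hxy0⟩ := exists_pair_ne P
      exact ⟨x0, y0, hxy0, by simp [div_self (dist_pos.2 hxy0).ne']⟩
  rw [lipUpper, h, csSup_singleton]

theorem lipLower_id [Nontrivial P] : lipLower (id : P → P) = 1 := by
  have h : {c | ∃ x y : P, x ≠ y ∧ c = dist (id x) (id y) / dist x y} = {1} := by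
    ext c
    constructor
    · rintro ⟨x, y, hxy, rfl⟩
      simp [div_self (dist_pos.2 hxy).ne']
    · rintro rfl
      obtain ⟨x0, y0, hxy0⟩ := exists_pair_ne P
      exact ⟨x0, y0, hxy0, by simp [div_self (dist_pos.2 hxy0).ne']⟩
  rw [lipLower, h, csInf_singleton]

end LipLemmas
theorem biLipschitz_equivalence_of_equal_lipschitz_data
    (d n : ℕ) (E : Type) [Fintype E] (src tgt : E → Fin n)
    (S f : E → EuclideanSpace ℝ (Fin d) → EuclideanSpace ℝ (Fin d))
    (hout : ∀ i : Fin n, ∃ e : E, src e = i)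
    -- all maps are bi-Lipschitz contractions
    (hSbiLip : ∀ e : E, ∃ l r : NNReal, 0 < l ∧ r < 1 ∧
      AntilipschitzWith l⁻¹ (S e) ∧ LipschitzWith r (S e))
    (hfbiLip : ∀ e : E, ∃ l r : NNReal, 0 < l ∧ r < 1 ∧
      AntilipschitzWith l⁻¹ (f e) ∧ LipschitzWith r (f e))
    -- the attractors
    (A : Fin n → Set (EuclideanSpace ℝ (Fin d)))
    (hAcp : ∀ i, IsCompact (A i)) (hAne : ∀ i, (A i).Nonempty)
    (hAattr : ∀ i, A i = ⋃ (e : E) (_ : src e = i), S e '' A (tgt e))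
    (B : Fin n → Set (EuclideanSpace ℝ (Fin d)))
    (hBcp : ∀ i, IsCompact (B i)) (hBne : ∀ i, (B i).Nonempty)
    (hBattr : ∀ i, B i = ⋃ (e : E) (_ : src e = i), f e '' B (tgt e))
    -- both systems satisfy the strong separation condition
    (hsscA : ∀ e e' : E, src e = src e' → e ≠ e' →
      Disjoint (S e '' A (tgt e)) (S e' '' A (tgt e')))
    (hsscB : ∀ e e' : E, src e = src e' → e ≠ e' →
      Disjoint (f e '' B (tgt e)) (f e' '' B (tgt e')))
    -- `S` satisfies the bounded distortion property with constant `K`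
    (K : ℝ) (hK : 0 < K)
    (hBDP : ∀ w : List E, w ≠ [] → (∃ i j, IsPathFrom src tgt i j w) →
      lipUpper (pathMap S w) ≤ K * lipLower (pathMap S w))
    -- the composed maps of the two systems have equal Lipschitz data on admissible paths
    (hLipEq : ∀ w : List E, w ≠ [] → (∃ i j, IsPathFrom src tgt i j w) →
      lipLower (pathMap S w) = lipLower (pathMap f w) ∧
      lipUpper (pathMap S w) = lipUpper (pathMap f w)) :
    ∀ i : Fin n, ∃ Φ : (A i) → (B i), Function.Bijective Φ ∧
      -- `Φ` preserves addresses
      (∀ (x : A i) (e : ℕ → E), src (e 0) = i → (∀ m, src (e (m + 1)) = tgt (e m)) →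
        (∀ m, (x : EuclideanSpace ℝ (Fin d)) ∈ compMap S e m '' A (tgt (e m))) →
        ∀ m, (Φ x : EuclideanSpace ℝ (Fin d)) ∈ compMap f e m '' B (tgt (e m))) ∧
      -- explicit bi-Lipschitz bounds
      (∀ x x' : A i,
        K⁻¹ * minGap f B src tgt * (maxDiam A)⁻¹ * dist x x' ≤ dist (Φ x) (Φ x') ∧
        dist (Φ x) (Φ x') ≤ K * (minGap S A src tgt)⁻¹ * maxDiam B * dist x x') := by
  intro i
  rcases subsingleton_or_nontrivial (EuclideanSpace ℝ (Fin d)) with hsub | hnt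
  · -- degenerate case: the ambient space is a single point
    refine ⟨fun _ => ⟨(hBne i).some, (hBne i).some_mem⟩, ⟨?_, ?_⟩, ?_, ?_⟩
    · intro a b _
      exact Subtype.ext (Subsingleton.elim _ _)
    · intro y
      exact ⟨⟨(hAne i).some, (hAne i).some_mem⟩, Subtype.ext (Subsingleton.elim _ _)⟩
    · intro x e _ _ _ m
      obtain ⟨z, hz⟩ := ((hBne (tgt (e m))).image (compMap f e m))
      show (hBne i).some ∈ compMap f e m '' B (tgt (e m))
      rwa [Subsingleton.elim ((hBne i).some) z]
    · intro x x'
      have h0 : dist x x' = 0 := by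
        rw [Subtype.dist_eq, Subsingleton.elim (x : EuclideanSpace ℝ (Fin d)) (x' : _)]
        exact dist_self _
      constructor
      · rw [h0, mul_zero]
        exact dist_nonneg
      · rw [h0, mul_zero]
        exact le_of_eq (dist_self _)
  · -- main case
    haveI := hnt
    classical
    haveI : Nonempty E := ⟨(hout i).choose⟩
    choose lS rS hlS hrS haS hlipS using hSbiLip
    choose lf rf hlf hrf haf hlipf using hfbiLip
    obtain ⟨ρS, hρS, hρSlip⟩ : ∃ ρ : NNReal, ρ < 1 ∧ ∀ e, LipschitzWith ρ (S e) := by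
      refine ⟨Finset.univ.sup' Finset.univ_nonempty rS, ?_, ?_⟩
      · exact (Finset.sup'_lt_iff _).2 fun e _ => hrS e
      · exact fun e => (hlipS e).weaken (Finset.le_sup' rS (Finset.mem_univ e))
    obtain ⟨ρf, hρf, hρflip⟩ : ∃ ρ : NNReal, ρ < 1 ∧ ∀ e, LipschitzWith ρ (f e) := by
      refine ⟨Finset.univ.sup' Finset.univ_nonempty rf, ?_, ?_⟩
      · exact (Finset.sup'_lt_iff _).2 fun e _ => hrf e
      · exact fun e => (hlipf e).weaken (Finset.le_sup' rf (Finset.mem_univ e))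
    have hSlipW : ∀ e, ∃ r : NNReal, LipschitzWith r (S e) := fun e => ⟨rS e, hlipS e⟩
    have hSalW : ∀ e, ∃ l : NNReal, 0 < l ∧ AntilipschitzWith l⁻¹ (S e) :=
      fun e => ⟨lS e, hlS e, haS e⟩
    have hflipW : ∀ e, ∃ r : NNReal, LipschitzWith r (f e) := fun e => ⟨rf e, hlipf e⟩
    have hfalW : ∀ e, ∃ l : NNReal, 0 < l ∧ AntilipschitzWith l⁻¹ (f e) :=
      fun e => ⟨lf e, hlf e, haf e⟩
    have hSinj : ∀ e, Function.Injective (S e) := fun e => (haS e).injective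
    have hfinj : ∀ e, Function.Injective (f e) := fun e => (haf e).injective
    -- K ≥ 1
    have hK1 : 1 ≤ K := by
      obtain ⟨e0, he0⟩ := hout i
      have hpath : IsPathFrom src tgt (src e0) (tgt e0) [e0] := ⟨rfl, rfl⟩
      have hb := hBDP [e0] (by simp) ⟨_, _, hpath⟩
      obtain ⟨l, hl, hal⟩ := pathMap_antilip S hSalW [e0]
      obtain ⟨r, hr⟩ := pathMap_lipschitz S hSlipW [e0]
      have h1 : (l : ℝ) ≤ lipLower (pathMap S [e0]) := le_lipLower hl hal
      have h2 := lipLower_le_lipUpper hr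
      have hlpos : (0:ℝ) < l := hl
      nlinarith [lt_of_lt_of_le hlpos h1]
    -- addresses of points of A i
    have haddr : ∀ x : A i, ∃ e : ℕ → E, src (e 0) = i ∧ (∀ m, src (e (m+1)) = tgt (e m)) ∧
        ∀ m, (x : EuclideanSpace ℝ (Fin d)) ∈ compMap S e m '' A (tgt (e m)) :=
      fun x => exists_address S A src tgt hAattr x.2
    choose addr h0 hadm hmem using haddr
    have hpt : ∀ x : A i, ∃! y : EuclideanSpace ℝ (Fin d),
        ∀ m, y ∈ compMap f (addr x) m '' B (tgt (addr x m)) :=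
      fun x => address_point f B src tgt hBattr hBcp hBne hρf hρflip (hadm x)
    choose Φ0 hΦmem hΦuniq using hpt
    have hpiece_f : ∀ e', f e' '' B (tgt e') ⊆ B (src e') := piece_subset f B src tgt hBattr
    have hpiece_S : ∀ e', S e' '' A (tgt e') ⊆ A (src e') := piece_subset S A src tgt hAattr
    have hΦB : ∀ x : A i, Φ0 x ∈ B i := by
      intro x
      have h1 : Φ0 x ∈ B (src (addr x 0)) := hpiece_f (addr x 0) (hΦmem x 0)
      rwa [h0 x] at h1
    refine ⟨fun x => ⟨Φ0 x, hΦB x⟩, ⟨?_, ?_⟩, ?_, ?_⟩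
    · -- injective
      intro x x' hxx
      have heq : Φ0 x = Φ0 x' := congrArg Subtype.val hxx
      have hmem'' : ∀ m, Φ0 x ∈ compMap f (addr x') m '' B (tgt (addr x' m)) := by
        rw [heq]; exact hΦmem x'
      have haeq : addr x = addr x' := address_unique f B src tgt hBattr hsscB hfinj
        (h0 x) (hadm x) (hΦmem x) (h0 x') (hadm x') hmem''
      have hptS := address_point S A src tgt hAattr hAcp hAne hρS hρSlip (hadm x)
      have hmem2 : ∀ m, (x' : EuclideanSpace ℝ (Fin d)) ∈
          compMap S (addr x) m '' A (tgt (addr x m)) := by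
        rw [haeq]; exact hmem x'
      exact Subtype.ext (hptS.unique (hmem x) hmem2)
    · -- surjective
      intro y
      obtain ⟨e, he0, headm, hemem⟩ := exists_address f B src tgt hBattr y.2
      obtain ⟨x0, hx0, -⟩ := address_point S A src tgt hAattr hAcp hAne hρS hρSlip headm
      have hx0A : x0 ∈ A i := by
        have h1 : x0 ∈ A (src (e 0)) := hpiece_S (e 0) (hx0 0)
        rwa [he0] at h1
      refine ⟨⟨x0, hx0A⟩, ?_⟩
      have haeq : addr ⟨x0, hx0A⟩ = e := address_unique S A src tgt hAattr hsscA hSinj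
        (h0 _) (hadm _) (hmem _) he0 headm hx0
      refine Subtype.ext ?_
      show Φ0 ⟨x0, hx0A⟩ = (y : EuclideanSpace ℝ (Fin d))
      exact (hΦuniq ⟨x0, hx0A⟩ (y : EuclideanSpace ℝ (Fin d)) (by rw [haeq]; exact hemem)).symm
    · -- address preservation
      intro x e he0 headm hxmem m
      have haeq : addr x = e := address_unique S A src tgt hAattr hsscA hSinj
        (h0 x) (hadm x) (hmem x) he0 headm hxmem
      show Φ0 x ∈ compMap f e m '' B (tgt (e m))
      rw [← haeq]
      exact hΦmem x m
    · -- bi-Lipschitz bounds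
      intro x x'
      rw [Subtype.dist_eq x x', Subtype.dist_eq]
      show K⁻¹ * minGap f B src tgt * (maxDiam A)⁻¹ *
          dist (x : EuclideanSpace ℝ (Fin d)) (x' : EuclideanSpace ℝ (Fin d)) ≤
          dist (Φ0 x) (Φ0 x') ∧
        dist (Φ0 x) (Φ0 x') ≤ K * (minGap S A src tgt)⁻¹ * maxDiam B *
          dist (x : EuclideanSpace ℝ (Fin d)) (x' : EuclideanSpace ℝ (Fin d))
      rcases eq_or_ne (x : EuclideanSpace ℝ (Fin d)) (x' : EuclideanSpace ℝ (Fin d))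
        with hxe | hne
      · have hxx' : x = x' := Subtype.ext hxe
        subst hxx'
        constructor
        · rw [dist_self, mul_zero]
          exact dist_nonneg
        · rw [dist_self, dist_self, mul_zero]
      · -- distinct points
        have hdiff : ∃ m, addr x m ≠ addr x' m := by
          by_contra hcon
          push_neg at hcon
          have haeq : addr x = addr x' := funext hcon
          have hptS := address_point S A src tgt hAattr hAcp hAne hρS hρSlip (hadm x)
          refine hne (hptS.unique (hmem x) ?_)
          rw [haeq]; exact hmem x'
        obtain ⟨m, hm, hlt⟩ : ∃ m, addr x m ≠ addr x' m ∧ ∀ k, k < m → addr x k = addr x' k :=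
          ⟨Nat.find hdiff, Nat.find_spec hdiff, fun k hk => not_not.1 (Nat.find_min hdiff hk)⟩
        obtain ⟨w, hw_def⟩ : ∃ w : List E, w = (List.range m).map (addr x) := ⟨_, rfl⟩
        have hw' : (List.range m).map (addr x') = w := by
          rw [hw_def]
          exact List.map_congr_left fun k hk => (hlt k (List.mem_range.1 hk)).symm
        -- source equality at the branching index
        have hsrc_all : ∀ k : ℕ, (∀ j, j < k → addr x j = addr x' j) →
            src (addr x k) = src (addr x' k) := by
          intro k hk
          cases k with
          | zero => rw [h0 x, h0 x']
          | succ k' => rw [hadm x k', hadm x' k', hk k' (Nat.lt_succ_self _)]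
        have hj : src (addr x m) = src (addr x' m) := hsrc_all m hlt
        -- decompositions
        have hxdec : (x : EuclideanSpace ℝ (Fin d)) ∈
            pathMap S w '' (S (addr x m) '' A (tgt (addr x m))) := by
          have h1 := hmem x m
          rw [compMap_eq_pathMap, List.range_succ, List.map_append, List.map_singleton, ← hw_def,
            pathMap_append, Set.image_comp, pathMap_singleton] at h1
          exact h1
        have hx'dec : (x' : EuclideanSpace ℝ (Fin d)) ∈
            pathMap S w '' (S (addr x' m) '' A (tgt (addr x' m))) := by
          have h1 := hmem x' m
          rw [compMap_eq_pathMap, List.range_succ, List.map_append, List.map_singleton, hw',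
            pathMap_append, Set.image_comp, pathMap_singleton] at h1
          exact h1
        have hzdec : Φ0 x ∈ pathMap f w '' (f (addr x m) '' B (tgt (addr x m))) := by
          have h1 := hΦmem x m
          rw [compMap_eq_pathMap, List.range_succ, List.map_append, List.map_singleton, ← hw_def,
            pathMap_append, Set.image_comp, pathMap_singleton] at h1
          exact h1
        have hz'dec : Φ0 x' ∈ pathMap f w '' (f (addr x' m) '' B (tgt (addr x' m))) := by
          have h1 := hΦmem x' m
          rw [compMap_eq_pathMap, List.range_succ, List.map_append, List.map_singleton, hw',
            pathMap_append, Set.image_comp, pathMap_singleton] at h1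
          exact h1
        obtain ⟨y, hy, hxy⟩ := hxdec
        obtain ⟨y', hy', hxy'⟩ := hx'dec
        obtain ⟨z, hz, hzy⟩ := hzdec
        obtain ⟨z', hz', hzy'⟩ := hz'dec
        have hyne : y ≠ y' := (hsscA (addr x m) (addr x' m) hj hm).ne_of_mem hy hy'
        have hyA : y ∈ A (src (addr x m)) := hpiece_S (addr x m) hy
        have hy'A : y' ∈ A (src (addr x m)) := by rw [hj]; exact hpiece_S (addr x' m) hy'
        have hzB : z ∈ B (src (addr x m)) := hpiece_f (addr x m) hz
        have hz'B : z' ∈ B (src (addr x m)) := by rw [hj]; exact hpiece_f (addr x' m) hz'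
        have hD1y : minGap S A src tgt ≤ dist y y' :=
          le_trans (minGap_le S A src tgt hj hm) (setDist_le_dist hy hy')
        have hD2z : minGap f B src tgt ≤ dist z z' :=
          le_trans (minGap_le f B src tgt hj hm) (setDist_le_dist hz hz')
        have hyMA : dist y y' ≤ maxDiam A := dist_le_maxDiam A hAcp hyA hy'A
        have hzMB : dist z z' ≤ maxDiam B := dist_le_maxDiam B hBcp hzB hz'B
        have hMApos : 0 < maxDiam A := lt_of_lt_of_le (dist_pos.2 hyne) hyMA
        have hD1pos : 0 < minGap S A src tgt := minGap_pos S A src tgt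
          (fun e => ((hAcp _).image (hlipS e).continuous)) (fun e => (hAne _).image _)
          hsscA ⟨addr x m, addr x' m, hj, hm⟩
        have hD2nn : 0 ≤ minGap f B src tgt := minGap_nonneg f B src tgt
        have hMBnn : 0 ≤ maxDiam B := maxDiam_nonneg B
        obtain ⟨rw1, hrw1⟩ := pathMap_lipschitz S hSlipW w
        obtain ⟨rw2, hrw2⟩ := pathMap_lipschitz f hflipW w
        obtain ⟨lw, hlw, halw⟩ := pathMap_antilip S hSalW w
        have hLpos : 0 < lipLower (pathMap S w) :=
          lt_of_lt_of_le hlw (le_lipLower hlw halw)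
        have hLnn : 0 ≤ lipLower (pathMap S w) := hLpos.le
        -- Lipschitz data facts
        have hdata : lipUpper (pathMap S w) ≤ K * lipLower (pathMap S w) ∧
            lipLower (pathMap f w) = lipLower (pathMap S w) ∧
            lipUpper (pathMap f w) = lipUpper (pathMap S w) := by
          rcases eq_or_ne w [] with hwnil | hwne
          · rw [hwnil]
            rw [show pathMap S ([] : List E) = id from rfl,
              show pathMap f ([] : List E) = id from rfl, lipUpper_id, lipLower_id]
            exact ⟨by nlinarith, rfl, rfl⟩
          · have hmpos : m ≠ 0 := by
              rintro rfl
              simp [hw_def] at hwne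
            obtain ⟨k, hk⟩ := Nat.exists_eq_succ_of_ne_zero hmpos
            have hpath : IsPathFrom src tgt i (tgt (addr x k)) w := by
              rw [hw_def, hk]
              exact isPathFrom_prefix (h0 x) (hadm x) k
            exact ⟨hBDP w hwne ⟨_, _, hpath⟩, (hLipEq w hwne ⟨_, _, hpath⟩).1.symm,
              (hLipEq w hwne ⟨_, _, hpath⟩).2.symm⟩
        -- the four basic estimates
        have h1 : dist (x : EuclideanSpace ℝ (Fin d)) (x' : EuclideanSpace ℝ (Fin d)) ≤
            K * lipLower (pathMap S w) * maxDiam A := by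
          rw [← hxy, ← hxy']
          calc dist (pathMap S w y) (pathMap S w y') ≤ lipUpper (pathMap S w) * dist y y' :=
            dist_le_lipUpper_mul hrw1 y y'
          _ ≤ (K * lipLower (pathMap S w)) * dist y y' :=
            mul_le_mul_of_nonneg_right hdata.1 dist_nonneg
          _ ≤ K * lipLower (pathMap S w) * maxDiam A :=
            mul_le_mul_of_nonneg_left hyMA (mul_nonneg hK.le hLnn)
        have h2 : lipLower (pathMap S w) * minGap S A src tgt ≤
            dist (x : EuclideanSpace ℝ (Fin d)) (x' : EuclideanSpace ℝ (Fin d)) := by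
          rw [← hxy, ← hxy']
          calc lipLower (pathMap S w) * minGap S A src tgt ≤
              lipLower (pathMap S w) * dist y y' := mul_le_mul_of_nonneg_left hD1y hLnn
          _ ≤ dist (pathMap S w y) (pathMap S w y') := lipLower_mul_le y y'
        have h3 : dist (Φ0 x) (Φ0 x') ≤ K * lipLower (pathMap S w) * maxDiam B := by
          rw [← hzy, ← hzy']
          calc dist (pathMap f w z) (pathMap f w z') ≤ lipUpper (pathMap f w) * dist z z' :=
            dist_le_lipUpper_mul hrw2 z z'
          _ = lipUpper (pathMap S w) * dist z z' := by rw [hdata.2.2]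
          _ ≤ (K * lipLower (pathMap S w)) * dist z z' :=
            mul_le_mul_of_nonneg_right hdata.1 dist_nonneg
          _ ≤ K * lipLower (pathMap S w) * maxDiam B :=
            mul_le_mul_of_nonneg_left hzMB (mul_nonneg hK.le hLnn)
        have h4 : lipLower (pathMap S w) * minGap f B src tgt ≤ dist (Φ0 x) (Φ0 x') := by
          rw [← hzy, ← hzy']
          calc lipLower (pathMap S w) * minGap f B src tgt ≤
              lipLower (pathMap S w) * dist z z' := mul_le_mul_of_nonneg_left hD2z hLnn
          _ = lipLower (pathMap f w) * dist z z' := by rw [hdata.2.1]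
          _ ≤ dist (pathMap f w z) (pathMap f w z') := lipLower_mul_le z z'
        constructor
        · have hstep := mul_le_mul_of_nonneg_left h1
            (show 0 ≤ K⁻¹ * minGap f B src tgt * (maxDiam A)⁻¹ from
              mul_nonneg (mul_nonneg (inv_nonneg.2 hK.le) hD2nn) (inv_nonneg.2 hMApos.le))
          calc K⁻¹ * minGap f B src tgt * (maxDiam A)⁻¹ *
              dist (x : EuclideanSpace ℝ (Fin d)) (x' : EuclideanSpace ℝ (Fin d)) ≤
              K⁻¹ * minGap f B src tgt * (maxDiam A)⁻¹ *
                (K * lipLower (pathMap S w) * maxDiam A) := hstep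
          _ = lipLower (pathMap S w) * minGap f B src tgt := by
              rw [show K⁻¹ * minGap f B src tgt * (maxDiam A)⁻¹ *
                  (K * lipLower (pathMap S w) * maxDiam A) =
                  (K⁻¹ * K) * ((maxDiam A)⁻¹ * maxDiam A) *
                  (lipLower (pathMap S w) * minGap f B src tgt) from by ring,
                inv_mul_cancel₀ hK.ne', inv_mul_cancel₀ hMApos.ne', one_mul, one_mul]
          _ ≤ dist (Φ0 x) (Φ0 x') := h4
        · have hstep := mul_le_mul_of_nonneg_left h2
            (show 0 ≤ K * (minGap S A src tgt)⁻¹ * maxDiam B from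
              mul_nonneg (mul_nonneg hK.le (inv_nonneg.2 hD1pos.le)) hMBnn)
          calc dist (Φ0 x) (Φ0 x') ≤ K * lipLower (pathMap S w) * maxDiam B := h3
          _ = K * (minGap S A src tgt)⁻¹ * maxDiam B *
              (lipLower (pathMap S w) * minGap S A src tgt) := by
              rw [show K * (minGap S A src tgt)⁻¹ * maxDiam B *
                  (lipLower (pathMap S w) * minGap S A src tgt) =
                  ((minGap S A src tgt)⁻¹ * minGap S A src tgt) *
                  (K * lipLower (pathMap S w) * maxDiam B) from by ring,
                inv_mul_cancel₀ hD1pos.ne', one_mul]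
          _ ≤ K * (minGap S A src tgt)⁻¹ * maxDiam B *
              dist (x : EuclideanSpace ℝ (Fin d)) (x' : EuclideanSpace ℝ (Fin d)) := hstep
end

section
/- Let A ⊆ ℝ^d be compact with A = L_0(A) ∪ L_1(A) ∪ C a disjoint union, where L_0, L_1 are bi-Lipschitz contractions and C is compact, and suppose the system has bounded distortion constant K' (i.e., Lip⁺(L_w) ≤ K'·Lip⁻(L_w) for all finite words w in {0,1}). Let S_0, S_1 be bi-Lipschitz contractions such that S_0(A) and S_1(A) are disjoint. Then A is bi-Lipschitz equivalent to S_0(A) ∪ S_1(A). -/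
open Set Metric Topology Function

/-- The composition `L_{i₁} ∘ ⋯ ∘ L_{i_m}` along a finite word in `{0,1}`. -/
def wordMap {P : Type*} (L : Fin 2 → P → P) : List (Fin 2) → P → P
  | [] => id
  | a :: w => L a ∘ wordMap L w

section helpers
variable {X : Type*} [MetricSpace X]

lemma gap_exists {K F : Set X} (hK : IsCompact K) (hF : IsCompact F) (h : Disjoint K F) :
    ∃ D > 0, ∀ x ∈ K, ∀ y ∈ F, D ≤ dist x y := by
  rcases K.eq_empty_or_nonempty with hKe | hKne
  · exact ⟨1, one_pos, by simp [hKe]⟩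
  rcases F.eq_empty_or_nonempty with hFe | hFne
  · exact ⟨1, one_pos, by simp [hFe]⟩
  obtain ⟨x0, hx0, hmin⟩ := hK.exists_isMinOn hKne (continuous_infDist_pt F).continuousOn
  refine ⟨infDist x0 F, ?_, ?_⟩
  · exact (hF.isClosed.notMem_iff_infDist_pos hFne).mp (disjoint_left.mp h hx0)
  · intro x hx y hy
    exact le_trans (hmin hx) (infDist_le_dist_of_mem hy)

omit [MetricSpace X] in
lemma wordMap_replicate (L : Fin 2 → X → X) (m : ℕ) :
    wordMap L (List.replicate m 1) = (L 1)^[m] := by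
  induction m with
  | zero => rfl
  | succ n ih =>
    rw [List.replicate_succ, Function.iterate_succ']
    show L 1 ∘ wordMap L (List.replicate n 1) = _
    rw [ih]

variable {f : X → X} {lf rf : ℝ}

lemma iter_dist_le (hf : ∀ x y, dist (f x) (f y) ≤ rf * dist x y) (hrf : 0 ≤ rf) (m : ℕ)
    (x y : X) : dist (f^[m] x) (f^[m] y) ≤ rf ^ m * dist x y := by
  induction m with
  | zero => simp
  | succ n ih =>
    rw [Function.iterate_succ_apply', Function.iterate_succ_apply', pow_succ]
    calc dist (f (f^[n] x)) (f (f^[n] y)) ≤ rf * dist (f^[n] x) (f^[n] y) := hf _ _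
    _ ≤ rf * (rf ^ n * dist x y) := by nlinarith [dist_nonneg (x := f^[n] x) (y := f^[n] y)]
    _ = rf ^ n * rf * dist x y := by ring

lemma iter_dist_ge (hf : ∀ x y, lf * dist x y ≤ dist (f x) (f y)) (hlf : 0 ≤ lf) (m : ℕ)
    (x y : X) : lf ^ m * dist x y ≤ dist (f^[m] x) (f^[m] y) := by
  induction m with
  | zero => simp
  | succ n ih =>
    rw [Function.iterate_succ_apply', Function.iterate_succ_apply', pow_succ]
    calc lf ^ n * lf * dist x y = lf * (lf ^ n * dist x y) := by ring
    _ ≤ lf * dist (f^[n] x) (f^[n] y) := by nlinarith [dist_nonneg (x := x) (y := y)]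
    _ ≤ dist (f (f^[n] x)) (f (f^[n] y)) := hf _ _

end helpers

section lip
variable {X : Type*} [MetricSpace X] {f : X → X} {lf rf : ℝ}

lemma ratio_mem {m : ℕ} {x y : X} (hxy : x ≠ y) :
    dist (f^[m] x) (f^[m] y) / dist x y
      ∈ {c | ∃ x y : X, x ≠ y ∧ c = dist (f^[m] x) (f^[m] y) / dist x y} :=
  ⟨x, y, hxy, rfl⟩

lemma ratio_bddBelow (hlb : ∀ x y, lf * dist x y ≤ dist (f x) (f y)) (hlf : 0 < lf) (m : ℕ) :
    ∀ c ∈ {c | ∃ x y : X, x ≠ y ∧ c = dist (f^[m] x) (f^[m] y) / dist x y}, lf ^ m ≤ c := by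
  rintro c ⟨x, y, hxy, rfl⟩
  have hd : 0 < dist x y := dist_pos.mpr hxy
  rw [le_div_iff₀ hd]
  exact iter_dist_ge hlb hlf.le m x y

lemma ratio_bddAbove_s17 (hub : ∀ x y, dist (f x) (f y) ≤ rf * dist x y) (hrf : 0 ≤ rf) (m : ℕ) :
    ∀ c ∈ {c | ∃ x y : X, x ≠ y ∧ c = dist (f^[m] x) (f^[m] y) / dist x y}, c ≤ rf ^ m := by
  rintro c ⟨x, y, hxy, rfl⟩
  have hd : 0 < dist x y := dist_pos.mpr hxy
  rw [div_le_iff₀ hd]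
  exact iter_dist_le hub hrf m x y

lemma lipLower_iter_pos (hlb : ∀ x y, lf * dist x y ≤ dist (f x) (f y)) (hlf : 0 < lf)
    (htp : ∃ z w : X, z ≠ w) (m : ℕ) : 0 < lipLower (f^[m]) := by
  obtain ⟨z, w, hzw⟩ := htp
  have h := le_csInf ⟨_, ratio_mem (m := m) hzw⟩ (ratio_bddBelow hlb hlf m)
  calc (0:ℝ) < lf ^ m := pow_pos hlf m
  _ ≤ _ := h

lemma lipLower_iter_mul_le (hlb : ∀ x y, lf * dist x y ≤ dist (f x) (f y)) (hlf : 0 < lf)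
    (m : ℕ) (x y : X) : lipLower (f^[m]) * dist x y ≤ dist (f^[m] x) (f^[m] y) := by
  rcases eq_or_ne x y with rfl | hxy
  · simp
  have hd : 0 < dist x y := dist_pos.mpr hxy
  have h1 : lipLower (f^[m]) ≤ dist (f^[m] x) (f^[m] y) / dist x y :=
    csInf_le ⟨lf ^ m, ratio_bddBelow hlb hlf m⟩ (ratio_mem hxy)
  calc lipLower (f^[m]) * dist x y ≤ dist (f^[m] x) (f^[m] y) / dist x y * dist x y := by
        exact mul_le_mul_of_nonneg_right h1 hd.le
  _ = dist (f^[m] x) (f^[m] y) := div_mul_cancel₀ _ hd.ne'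

lemma lipUpper_iter_le_mul (hub : ∀ x y, dist (f x) (f y) ≤ rf * dist x y) (hrf : 0 ≤ rf)
    (m : ℕ) (x y : X) : dist (f^[m] x) (f^[m] y) ≤ lipUpper (f^[m]) * dist x y := by
  rcases eq_or_ne x y with rfl | hxy
  · simp
  have hd : 0 < dist x y := dist_pos.mpr hxy
  have h1 : dist (f^[m] x) (f^[m] y) / dist x y ≤ lipUpper (f^[m]) :=
    le_csSup ⟨rf ^ m, ratio_bddAbove_s17 hub hrf m⟩ (ratio_mem hxy)
  calc dist (f^[m] x) (f^[m] y) = dist (f^[m] x) (f^[m] y) / dist x y * dist x y :=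
        (div_mul_cancel₀ _ hd.ne').symm
  _ ≤ lipUpper (f^[m]) * dist x y := mul_le_mul_of_nonneg_right h1 hd.le

lemma lipLower_iter_succ_ge (hlb : ∀ x y, lf * dist x y ≤ dist (f x) (f y)) (hlf : 0 < lf)
    (htp : ∃ z w : X, z ≠ w) (m : ℕ) :
    lf * lipLower (f^[m]) ≤ lipLower (f^[m + 1]) := by
  obtain ⟨z, w, hzw⟩ := htp
  refine le_csInf ⟨_, ratio_mem (m := m + 1) hzw⟩ ?_
  rintro c ⟨x, y, hxy, rfl⟩
  have hd : 0 < dist x y := dist_pos.mpr hxy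
  rw [le_div_iff₀ hd]
  calc lf * lipLower (f^[m]) * dist x y = lf * (lipLower (f^[m]) * dist x y) := by ring
  _ ≤ lf * dist (f^[m] x) (f^[m] y) :=
      mul_le_mul_of_nonneg_left (lipLower_iter_mul_le hlb hlf m x y) hlf.le
  _ ≤ dist (f (f^[m] x)) (f (f^[m] y)) := hlb _ _
  _ = dist (f^[m+1] x) (f^[m+1] y) := by rw [Function.iterate_succ_apply', Function.iterate_succ_apply']

lemma lipLower_iter_succ_le (hlb : ∀ x y, lf * dist x y ≤ dist (f x) (f y)) (hlf : 0 < lf)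
    (hub : ∀ x y, dist (f x) (f y) ≤ rf * dist x y) (hrf : 0 < rf)
    (htp : ∃ z w : X, z ≠ w) (m : ℕ) :
    lipLower (f^[m + 1]) ≤ rf * lipLower (f^[m]) := by
  obtain ⟨z, w, hzw⟩ := htp
  rw [mul_comm, ← div_le_iff₀ hrf]
  refine le_csInf ⟨_, ratio_mem (m := m) hzw⟩ ?_
  · rintro c ⟨x, y, hxy, rfl⟩
    have hd : 0 < dist x y := dist_pos.mpr hxy
    have h1 : lipLower (f^[m + 1]) ≤ dist (f^[m+1] x) (f^[m+1] y) / dist x y :=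
      csInf_le ⟨lf ^ (m+1), ratio_bddBelow hlb hlf (m+1)⟩ (ratio_mem hxy)
    rw [div_le_div_iff₀ hrf hd] at *
    calc lipLower (f^[m + 1]) * dist x y ≤ dist (f^[m+1] x) (f^[m+1] y) := by
          have := (le_div_iff₀ hd).mp h1
          linarith
    _ = dist (f (f^[m] x)) (f (f^[m] y)) := by rw [Function.iterate_succ_apply', Function.iterate_succ_apply']
    _ ≤ rf * dist (f^[m] x) (f^[m] y) := hub _ _
    _ = dist (f^[m] x) (f^[m] y) * rf := by ring

end lip

set_option maxHeartbeats 4000000 in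
theorem biLipschitz_equiv_to_disjoint_union_of_two_copies
    (d : ℕ) (A C : Set (EuclideanSpace ℝ (Fin d)))
    (hA : IsCompact A) (hC : IsCompact C)
    (L : Fin 2 → EuclideanSpace ℝ (Fin d) → EuclideanSpace ℝ (Fin d))
    (l r : Fin 2 → ℝ) (hl : ∀ i, l i ∈ Set.Ioo (0:ℝ) 1) (hr : ∀ i, r i ∈ Set.Ioo (0:ℝ) 1)
    (hLbiLip : ∀ i, ∀ x y, l i * dist x y ≤ dist (L i x) (L i y) ∧
      dist (L i x) (L i y) ≤ r i * dist x y)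
    -- the disjoint decomposition `A = L₀(A) ∪ L₁(A) ∪ C`
    (hdecomp : A = L 0 '' A ∪ L 1 '' A ∪ C)
    (hd01 : Disjoint (L 0 '' A) (L 1 '' A))
    (hd0C : Disjoint (L 0 '' A) C) (hd1C : Disjoint (L 1 '' A) C)
    -- the bounded distortion property with constant `K'`
    (K' : ℝ) (hK' : 0 < K')
    (hBDP : ∀ w : List (Fin 2), lipUpper (wordMap L w) ≤ K' * lipLower (wordMap L w))
    -- two bi-Lipschitz contractions with disjoint images of `A`
    (S : Fin 2 → EuclideanSpace ℝ (Fin d) → EuclideanSpace ℝ (Fin d))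
    (l' r' : Fin 2 → ℝ) (hl' : ∀ i, l' i ∈ Set.Ioo (0:ℝ) 1) (hr' : ∀ i, r' i ∈ Set.Ioo (0:ℝ) 1)
    (hSbiLip : ∀ i, ∀ x y, l' i * dist x y ≤ dist (S i x) (S i y) ∧
      dist (S i x) (S i y) ≤ r' i * dist x y)
    (hSdisj : Disjoint (S 0 '' A) (S 1 '' A)) :
    ∃ ψ : A → (S 0 '' A ∪ S 1 '' A : Set (EuclideanSpace ℝ (Fin d))),
      Function.Bijective ψ ∧ ∃ c C₀ : ℝ, 0 < c ∧ c ≤ C₀ ∧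
        ∀ x x' : A, c * dist x x' ≤ dist (ψ x) (ψ x') ∧
          dist (ψ x) (ψ x') ≤ C₀ * dist x x' := by
  classical
  rcases A.eq_empty_or_nonempty with hAe | ⟨a0, ha0⟩
  · haveI h1 : IsEmpty A := by rw [hAe]; exact Set.isEmpty_coe_sort.mpr rfl
    haveI h2 : IsEmpty ↥(S 0 '' A ∪ S 1 '' A) := by
      rw [hAe]
      simp only [Set.image_empty, Set.union_empty]
      exact Set.isEmpty_coe_sort.mpr rfl
    exact ⟨Equiv.equivOfIsEmpty _ _, (Equiv.equivOfIsEmpty _ _).bijective, 1, 1, one_pos, le_rfl,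
      fun x => isEmptyElim x⟩
  -- basic constants
  have hl0p : 0 < l 0 := (hl 0).1
  have hl1p : 0 < l 1 := (hl 1).1
  have hr0p : 0 < r 0 := (hr 0).1
  have hr1p : 0 < r 1 := (hr 1).1
  have hl1lt : l 1 < 1 := (hl 1).2
  have hr1lt : r 1 < 1 := (hr 1).2
  have hl'0p : 0 < l' 0 := (hl' 0).1
  have hl'1p : 0 < l' 1 := (hl' 1).1
  have hr'0p : 0 < r' 0 := (hr' 0).1
  have hr'1p : 0 < r' 1 := (hr' 1).1
  -- injectivity
  have hinj : ∀ i, Function.Injective (L i) := by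
    intro i x y h
    have h1 := (hLbiLip i x y).1
    rw [h, dist_self] at h1
    have h2 := (hl i).1
    have : dist x y ≤ 0 := by nlinarith [dist_nonneg (x := x) (y := y)]
    exact dist_le_zero.mp this
  have hSinj : ∀ i, Function.Injective (S i) := by
    intro i x y h
    have h1 := (hSbiLip i x y).1
    rw [h, dist_self] at h1
    have h2 := (hl' i).1
    have : dist x y ≤ 0 := by nlinarith [dist_nonneg (x := x) (y := y)]
    exact dist_le_zero.mp this
  -- Lipschitz continuity
  have hLlip : ∀ i, LipschitzWith (Real.toNNReal (r i)) (L i) := fun i =>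
    LipschitzWith.of_dist_le_mul (fun x y => by
      rw [Real.coe_toNNReal _ (hr i).1.le]; exact (hLbiLip i x y).2)
  have hSlip : ∀ i, LipschitzWith (Real.toNNReal (r' i)) (S i) := fun i =>
    LipschitzWith.of_dist_le_mul (fun x y => by
      rw [Real.coe_toNNReal _ (hr' i).1.le]; exact (hSbiLip i x y).2)
  -- subsets
  have hL0A : L 0 '' A ⊆ A := by
    intro x hx; rw [hdecomp]; exact Set.mem_union_left _ (Set.mem_union_left _ hx)
  have hL1A : L 1 '' A ⊆ A := by
    intro x hx; rw [hdecomp]; exact Set.mem_union_left _ (Set.mem_union_right _ hx)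
  have hCA : C ⊆ A := by intro x hx; rw [hdecomp]; exact Set.mem_union_right _ hx
  have hiterA : ∀ m (x : EuclideanSpace ℝ (Fin d)), x ∈ A → (L 1)^[m] x ∈ A := by
    intro m
    induction m with
    | zero => intro x hx; simpa using hx
    | succ n ih =>
      intro x hx
      rw [Function.iterate_succ_apply']
      exact hL1A ⟨_, ih x hx, rfl⟩
  -- compactness of images
  have hL0Ac : IsCompact (L 0 '' A) := hA.image (hLlip 0).continuous
  have hL1Ac : IsCompact (L 1 '' A) := hA.image (hLlip 1).continuous
  -- two distinct points
  have hz0 : L 0 a0 ∈ L 0 '' A := ⟨a0, ha0, rfl⟩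
  have hz1 : L 1 a0 ∈ L 1 '' A := ⟨a0, ha0, rfl⟩
  have hz01 : L 0 a0 ≠ L 1 a0 := by
    intro h
    exact (Set.disjoint_left.mp hd01 hz0) (h ▸ hz1)
  have htp : ∃ z w : EuclideanSpace ℝ (Fin d), z ≠ w := ⟨_, _, hz01⟩
  -- gap constants
  obtain ⟨D1, hD1p, hD1⟩ := gap_exists hL0Ac hL1Ac hd01
  obtain ⟨D2, hD2p, hD2⟩ := gap_exists hL0Ac hC hd0C
  obtain ⟨D3, hD3p, hD3⟩ := gap_exists hL1Ac hC hd1C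
  set D : ℝ := min D1 (min D2 D3) with hDdef
  have hDp : 0 < D := lt_min hD1p (lt_min hD2p hD3p)
  have hD01 : ∀ y ∈ L 0 '' A, ∀ y' ∈ L 1 '' A, D ≤ dist y y' := fun y hy y' hy' =>
    le_trans (min_le_left _ _) (hD1 y hy y' hy')
  have hD0C : ∀ y ∈ L 0 '' A, ∀ y' ∈ C, D ≤ dist y y' := fun y hy y' hy' =>
    le_trans ((min_le_right _ _).trans (min_le_left _ _)) (hD2 y hy y' hy')
  have hD1C : ∀ y ∈ L 1 '' A, ∀ y' ∈ C, D ≤ dist y y' := fun y hy y' hy' =>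
    le_trans ((min_le_right _ _).trans (min_le_right _ _)) (hD3 y hy y' hy')
  -- diameter bound
  set Δ : ℝ := Metric.diam A with hΔdef
  have hΔ : ∀ x ∈ A, ∀ y ∈ A, dist x y ≤ Δ := fun x hx y hy =>
    Metric.dist_le_diam_of_mem hA.isBounded hx hy
  have hΔp : 0 < Δ :=
    lt_of_lt_of_le (dist_pos.mpr hz01) (hΔ _ (hL0A hz0) _ (hL1A hz1))
  -- gap and diameter for the S-images
  obtain ⟨E', hE'p, hE'⟩ := gap_exists (hA.image (hSlip 0).continuous)
    (hA.image (hSlip 1).continuous) hSdisj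
  set Δ' : ℝ := Metric.diam (S 0 '' A ∪ S 1 '' A) with hΔ'def
  have hΔ' : ∀ x ∈ S 0 '' A ∪ S 1 '' A, ∀ y ∈ S 0 '' A ∪ S 1 '' A, dist x y ≤ Δ' :=
    fun x hx y hy => Metric.dist_le_diam_of_mem
      (((hA.image (hSlip 0).continuous).union (hA.image (hSlip 1).continuous)).isBounded) hx hy
  -- the fixed point of L 1
  have hcontr : ContractingWith (Real.toNNReal (r 1)) (L 1) :=
    ⟨Real.toNNReal_lt_one.mpr hr1lt, hLlip 1⟩
  set t : EuclideanSpace ℝ (Fin d) := ContractingWith.fixedPoint (L 1) hcontr with htdef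
  have ht_fix : L 1 t = t := hcontr.fixedPoint_isFixedPt
  have ht_iter : ∀ m, (L 1)^[m] t = t := by
    intro m
    induction m with
    | zero => rfl
    | succ n ih => rw [Function.iterate_succ_apply', ih, ht_fix]
  have htA : t ∈ A := by
    have h1 : Filter.Tendsto (fun n => (L 1)^[n] a0) Filter.atTop (nhds t) :=
      hcontr.tendsto_iterate_fixedPoint a0
    exact hA.isClosed.mem_of_tendsto h1
      (Filter.Eventually.of_forall fun n => hiterA n a0 ha0)
  have ht1 : t ∈ L 1 '' A := ⟨t, htA, ht_fix⟩
  -- the pieces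
  set T : ℕ → Set (EuclideanSpace ℝ (Fin d)) := fun m => (L 1)^[m] '' (L 0 '' A) with hTdef
  set U : ℕ → Set (EuclideanSpace ℝ (Fin d)) := fun m => (L 1)^[m] '' C with hUdef
  set Ap : Set (EuclideanSpace ℝ (Fin d)) := ⋃ m, T (m + 1) with hApdef
  set Cs : Set (EuclideanSpace ℝ (Fin d)) := (⋃ m, U m) ∪ {t} with hCsdef
  have hT0eq : T 0 = L 0 '' A := by simp [hTdef]
  have hTsubA : ∀ m, T m ⊆ A := by
    rintro m x ⟨y, hy, rfl⟩
    exact hiterA m y (hL0A hy)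
  have hUsubA : ∀ m, U m ⊆ A := by
    rintro m x ⟨y, hy, rfl⟩
    exact hiterA m y (hCA hy)
  have hTsub1 : ∀ m, T (m + 1) ⊆ L 1 '' A := by
    rintro m x ⟨y, hy, rfl⟩
    rw [Function.iterate_succ_apply']
    exact ⟨_, hiterA m y (hL0A hy), rfl⟩
  have hUsub1 : ∀ m, U (m + 1) ⊆ L 1 '' A := by
    rintro m x ⟨y, hy, rfl⟩
    rw [Function.iterate_succ_apply']
    exact ⟨_, hiterA m y (hCA hy), rfl⟩
  have hApsubA : Ap ⊆ A := by
    rw [hApdef]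
    exact Set.iUnion_subset fun m => hTsubA (m + 1)
  have hCssubA : Cs ⊆ A := by
    rw [hCsdef]
    refine Set.union_subset (Set.iUnion_subset fun m => hUsubA m) ?_
    simpa using htA
  have hApsub1 : Ap ⊆ L 1 '' A := by
    rw [hApdef]
    exact Set.iUnion_subset fun m => hTsub1 m
  -- disjointness of the pieces
  have peel : ∀ k (y z : EuclideanSpace ℝ (Fin d)), (L 1)^[k] y = (L 1)^[k] z → y = z :=
    fun k y z h => Function.Injective.iterate (hinj 1) k h
  have hTU : ∀ p m (x : EuclideanSpace ℝ (Fin d)), x ∈ T p → x ∉ U m := by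
    rintro p m x ⟨w, ⟨a, ha, rfl⟩, rfl⟩ ⟨c, hc, heq⟩
    rcases le_total p m with h | h
    · rcases Nat.exists_eq_add_of_le h with ⟨k, rfl⟩
      rw [Function.iterate_add_apply] at heq
      have h2 : (L 1)^[k] c = L 0 a := peel p _ _ heq
      cases k with
      | zero =>
        simp only [Function.iterate_zero, id_eq] at h2
        exact Set.disjoint_left.mp hd0C ⟨a, ha, rfl⟩ (h2 ▸ hc)
      | succ j =>
        rw [Function.iterate_succ_apply'] at h2
        exact Set.disjoint_left.mp hd01 ⟨a, ha, rfl⟩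
          ⟨(L 1)^[j] c, hiterA j c (hCA hc), h2⟩
    · rcases Nat.exists_eq_add_of_le h with ⟨k, rfl⟩
      rw [Function.iterate_add_apply] at heq
      have h2 : c = (L 1)^[k] (L 0 a) := peel m _ _ heq
      cases k with
      | zero =>
        simp only [Function.iterate_zero, id_eq] at h2
        exact Set.disjoint_left.mp hd0C ⟨a, ha, rfl⟩ (h2 ▸ hc)
      | succ j =>
        rw [Function.iterate_succ_apply'] at h2
        exact Set.disjoint_right.mp hd1C hc
          ⟨(L 1)^[j] (L 0 a), hiterA j _ (hL0A ⟨a, ha, rfl⟩), h2.symm⟩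
  have htT : ∀ p, t ∉ T p := by
    rintro p ⟨w, ⟨a, ha, rfl⟩, heq⟩
    have h2 : L 0 a = t := peel p _ _ (heq.trans (ht_iter p).symm)
    exact Set.disjoint_left.mp hd01 ⟨a, ha, rfl⟩ (h2 ▸ ht1)
  have htU : ∀ m, t ∉ U m := by
    rintro m ⟨c, hc, heq⟩
    have h2 : c = t := peel m _ _ (heq.trans (ht_iter m).symm)
    exact Set.disjoint_right.mp hd1C (h2 ▸ hc) ht1
  have hTT : ∀ p q, p < q → ∀ x ∈ T p, x ∉ T q := by
    rintro p q hpq x ⟨w, ⟨a, ha, rfl⟩, rfl⟩ ⟨w', ⟨a', ha', rfl⟩, heq⟩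
    rcases Nat.exists_eq_add_of_lt hpq with ⟨k, rfl⟩
    rw [show p + k + 1 = p + (k + 1) by ring, Function.iterate_add_apply] at heq
    have h2 : (L 1)^[k + 1] (L 0 a') = L 0 a := peel p _ _ heq
    rw [Function.iterate_succ_apply'] at h2
    exact Set.disjoint_left.mp hd01 ⟨a, ha, rfl⟩
      ⟨(L 1)^[k] (L 0 a'), hiterA k _ (hL0A ⟨a', ha', rfl⟩), h2⟩
  have hTCs : ∀ p, ∀ x ∈ T p, x ∉ Cs := by
    intro p x hx hmem
    rw [hCsdef] at hmem
    rcases hmem with hmem | hmem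
    · obtain ⟨m, hm⟩ := Set.mem_iUnion.mp hmem
      exact hTU p m x hx hm
    · rw [Set.mem_singleton_iff] at hmem
      exact htT p (hmem ▸ hx)
  have hT0Cs : ∀ x ∈ T 0, x ∉ Cs := hTCs 0
  have hT0Ap : ∀ x ∈ T 0, x ∉ Ap := by
    intro x hx hmem
    obtain ⟨m, hm⟩ := Set.mem_iUnion.mp hmem
    exact hTT 0 (m + 1) (Nat.succ_pos m) x hx hm
  have hCsAp : ∀ x ∈ Cs, x ∉ Ap := by
    intro x hx hmem
    obtain ⟨m, hm⟩ := Set.mem_iUnion.mp hmem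
    rw [hCsdef] at hx
    rcases hx with hx | hx
    · obtain ⟨k, hk⟩ := Set.mem_iUnion.mp hx
      exact hTU (m + 1) k x hm hk
    · rw [Set.mem_singleton_iff] at hx
      exact htT (m + 1) (hx ▸ hm)
  -- the covering
  have hcover : ∀ x ∈ A, x ∈ T 0 ∨ x ∈ Ap ∨ x ∈ Cs := by
    intro x hx
    by_cases hall : ∀ m, x ∈ (L 1)^[m] '' A
    · -- x = t
      have hxt : x = t := by
        have key : ∀ m, dist x t ≤ r 1 ^ m * Δ := by
          intro m
          obtain ⟨y, hy, hyx⟩ := hall m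
          have h1 : dist x t = dist ((L 1)^[m] y) ((L 1)^[m] t) := by
            rw [hyx, ht_iter m]
          rw [h1]
          calc dist ((L 1)^[m] y) ((L 1)^[m] t) ≤ r 1 ^ m * dist y t :=
                iter_dist_le (fun x y => (hLbiLip 1 x y).2) hr1p.le m y t
          _ ≤ r 1 ^ m * Δ := by
              have := hΔ y hy t htA
              nlinarith [pow_pos hr1p m]
        have h0 : Filter.Tendsto (fun m => r 1 ^ m * Δ) Filter.atTop (nhds 0) := by
          have := (tendsto_pow_atTop_nhds_zero_of_lt_one hr1p.le hr1lt).mul_const Δ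
          simpa using this
        have h2 : dist x t ≤ 0 := ge_of_tendsto h0 (Filter.Eventually.of_forall key)
        exact dist_le_zero.mp h2
      right; right
      rw [hCsdef]
      exact Set.mem_union_right _ (by simp [hxt])
    · push_neg at hall
      have h0A : x ∈ (L 1)^[0] '' A := by simpa using hx
      set n := Nat.find hall with hndef
      have hn1 : x ∉ (L 1)^[n] '' A := Nat.find_spec hall
      have hnpos : 0 < n := by
        rcases Nat.eq_zero_or_pos n with h | h
        · exact absurd (h ▸ h0A) hn1
        · exact h
      obtain ⟨k, hk⟩ := Nat.exists_eq_succ_of_ne_zero hnpos.ne'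
      have hk2 : x ∈ (L 1)^[k] '' A := by
        by_contra hcon
        have hle : n ≤ k := Nat.find_le hcon
        omega
      obtain ⟨y, hyA, hyx⟩ := hk2
      have hy1 : y ∉ L 1 '' A := by
        rintro ⟨z, hz, rfl⟩
        refine hn1 ⟨z, hz, ?_⟩
        rw [hk, ← hyx, Function.iterate_succ_apply]
      have hycase : y ∈ L 0 '' A ∨ y ∈ C := by
        have := hdecomp ▸ hyA
        rcases this with (h | h) | h
        · exact Or.inl h
        · exact absurd h hy1
        · exact Or.inr h
      rcases hycase with hy | hy
      · cases k with
        | zero =>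
          left
          rw [hT0eq]
          simpa using hyx ▸ hy
        | succ j =>
          right; left
          rw [hApdef]
          exact Set.mem_iUnion.mpr ⟨j, ⟨y, hy, hyx⟩⟩
      · right; right
        rw [hCsdef]
        exact Set.mem_union_left _ (Set.mem_iUnion.mpr ⟨k, ⟨y, hy, hyx⟩⟩)
  -- the maps σ and g
  set σ : EuclideanSpace ℝ (Fin d) → EuclideanSpace ℝ (Fin d) :=
    fun x => if x ∈ Ap then Function.invFun (L 1) x else x with hσdef
  set g : EuclideanSpace ℝ (Fin d) → EuclideanSpace ℝ (Fin d) :=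
    fun x => if x ∈ T 0 then S 0 (Function.invFun (L 0) x) else S 1 (σ x) with hgdef
  have hinvL : ∀ i (x : EuclideanSpace ℝ (Fin d)), Function.invFun (L i) (L i x) = x :=
    fun i => Function.leftInverse_invFun (hinj i)
  have hσT : ∀ p (a : EuclideanSpace ℝ (Fin d)), a ∈ A →
      σ ((L 1)^[p + 1] (L 0 a)) = (L 1)^[p] (L 0 a) := by
    intro p a ha
    have hmem : (L 1)^[p + 1] (L 0 a) ∈ Ap := by
      rw [hApdef]
      exact Set.mem_iUnion.mpr ⟨p, ⟨L 0 a, ⟨a, ha, rfl⟩, rfl⟩⟩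
    rw [hσdef]
    simp only [if_pos hmem]
    rw [Function.iterate_succ_apply']
    exact hinvL 1 _
  have hσCs : ∀ x ∈ Cs, σ x = x := by
    intro x hx
    rw [hσdef]
    simp only [if_neg (hCsAp x hx)]
  have hgT0 : ∀ a ∈ A, g (L 0 a) = S 0 a := by
    intro a ha
    have hmem : L 0 a ∈ T 0 := hT0eq ▸ ⟨a, ha, rfl⟩
    rw [hgdef]
    simp only [if_pos hmem]
    rw [hinvL 0]
  have hgRest : ∀ x, x ∉ T 0 → g x = S 1 (σ x) := by
    intro x hx
    rw [hgdef]
    simp only [if_neg hx]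
  -- membership of σ-images
  have hσApA : ∀ x ∈ Ap, ∃ m, σ x ∈ T m ∧ x = L 1 (σ x) := by
    intro x hx
    obtain ⟨m, hm⟩ := Set.mem_iUnion.mp hx
    obtain ⟨y, hy, rfl⟩ := hm
    obtain ⟨a, ha, rfl⟩ := hy
    rw [hσT m a ha]
    exact ⟨m, ⟨L 0 a, ⟨a, ha, rfl⟩, rfl⟩, Function.iterate_succ_apply' _ _ _⟩
  -- bijectivity
  have hσA : ∀ x ∈ A, x ∉ T 0 → σ x ∈ A ∧ g x = S 1 (σ x) := by
    intro x hx h0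
    rcases hcover x hx with h | h | h
    · exact absurd h h0
    · obtain ⟨m, hm, _⟩ := hσApA x h
      exact ⟨hTsubA m hm, hgRest x h0⟩
    · refine ⟨?_, hgRest x h0⟩
      rw [hσCs x h]
      exact hx
  have hbij : Set.BijOn g A (S 0 '' A ∪ S 1 '' A) := by
    refine ⟨?_, ?_, ?_⟩
    · -- MapsTo
      intro x hx
      by_cases h0 : x ∈ T 0
      · rw [hT0eq] at h0
        obtain ⟨a, ha, rfl⟩ := h0
        rw [hgT0 a ha]
        exact Set.mem_union_left _ ⟨a, ha, rfl⟩
      · obtain ⟨hσmem, hgeq⟩ := hσA x hx h0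
        rw [hgeq]
        exact Set.mem_union_right _ ⟨σ x, hσmem, rfl⟩
    · -- InjOn
      intro x hx x' hx' heq
      by_cases h1 : x ∈ T 0 <;> by_cases h2 : x' ∈ T 0
      · rw [hT0eq] at h1 h2
        obtain ⟨a, ha, rfl⟩ := h1
        obtain ⟨a', ha', rfl⟩ := h2
        rw [hgT0 a ha, hgT0 a' ha'] at heq
        rw [hSinj 0 heq]
      · exfalso
        rw [hT0eq] at h1
        obtain ⟨a, ha, hae⟩ := h1
        obtain ⟨hσmem, hgeq⟩ := hσA x' hx' h2
        rw [← hae, hgT0 a ha, hgeq] at heq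
        exact Set.disjoint_left.mp hSdisj ⟨a, ha, rfl⟩ (heq ▸ ⟨σ x', hσmem, rfl⟩)
      · exfalso
        rw [hT0eq] at h2
        obtain ⟨a, ha, hae⟩ := h2
        obtain ⟨hσmem, hgeq⟩ := hσA x hx h1
        rw [← hae, hgT0 a ha, hgeq] at heq
        exact Set.disjoint_left.mp hSdisj ⟨a, ha, rfl⟩ (heq.symm ▸ ⟨σ x, hσmem, rfl⟩)
      · obtain ⟨hσm1, hg1⟩ := hσA x hx h1
        obtain ⟨hσm2, hg2⟩ := hσA x' hx' h2
        rw [hg1, hg2] at heq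
        have hσeq : σ x = σ x' := hSinj 1 heq
        rcases hcover x hx with h | hxa | hxc
        · exact absurd h h1
        · rcases hcover x' hx' with h | hxa' | hxc'
          · exact absurd h h2
          · obtain ⟨m, _, he1⟩ := hσApA x hxa
            obtain ⟨m', _, he2⟩ := hσApA x' hxa'
            rw [he1, he2, hσeq]
          · exfalso
            obtain ⟨m, hm, _⟩ := hσApA x hxa
            rw [hσCs x' hxc'] at hσeq
            exact hTCs m (σ x) hm (hσeq ▸ hxc')
        · rcases hcover x' hx' with h | hxa' | hxc'
          · exact absurd h h2
          · exfalso
            obtain ⟨m, hm, _⟩ := hσApA x' hxa'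
            rw [hσCs x hxc] at hσeq
            exact hTCs m (σ x') hm (hσeq ▸ hxc)
          · rw [hσCs x hxc, hσCs x' hxc'] at hσeq
            exact hσeq
    · -- SurjOn
      intro y hy
      rcases hy with ⟨a, ha, rfl⟩ | ⟨a, ha, rfl⟩
      · exact ⟨L 0 a, hL0A ⟨a, ha, rfl⟩, hgT0 a ha⟩
      · rcases hcover a ha with h | h | h
        · -- a ∈ T 0
          rw [hT0eq] at h
          obtain ⟨b, hb, rfl⟩ := h
          have hmem : (L 1)^[0 + 1] (L 0 b) ∈ Ap := by
            rw [hApdef]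
            exact Set.mem_iUnion.mpr ⟨0, ⟨L 0 b, ⟨b, hb, rfl⟩, rfl⟩⟩
          refine ⟨(L 1)^[0 + 1] (L 0 b), hApsubA hmem, ?_⟩
          rw [hgRest _ (fun hc => hT0Ap _ hc hmem), hσT 0 b hb]
          simp
        · -- a ∈ Ap
          obtain ⟨m, hm⟩ := Set.mem_iUnion.mp h
          obtain ⟨w, ⟨b, hb, rfl⟩, rfl⟩ := hm
          have hmem : (L 1)^[m + 1 + 1] (L 0 b) ∈ Ap := by
            rw [hApdef]
            exact Set.mem_iUnion.mpr ⟨m + 1, ⟨L 0 b, ⟨b, hb, rfl⟩, rfl⟩⟩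
          refine ⟨(L 1)^[m + 1 + 1] (L 0 b), hApsubA hmem, ?_⟩
          rw [hgRest _ (fun hc => hT0Ap _ hc hmem), hσT (m + 1) b hb]
        · -- a ∈ Cs
          refine ⟨a, ha, ?_⟩
          rw [hgRest _ (fun hc => hT0Cs _ hc h), hσCs a h]
  -- iterate Lipschitz-constant machinery
  have hlb1 : ∀ x y : EuclideanSpace ℝ (Fin d), l 1 * dist x y ≤ dist (L 1 x) (L 1 y) :=
    fun x y => (hLbiLip 1 x y).1
  have hub1 : ∀ x y : EuclideanSpace ℝ (Fin d), dist (L 1 x) (L 1 y) ≤ r 1 * dist x y :=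
    fun x y => (hLbiLip 1 x y).2
  set v : ℕ → ℝ := fun m => lipLower ((L 1)^[m]) with hvdef
  set u : ℕ → ℝ := fun m => lipUpper ((L 1)^[m]) with hudef
  have hv_mul : ∀ m (x y : EuclideanSpace ℝ (Fin d)),
      v m * dist x y ≤ dist ((L 1)^[m] x) ((L 1)^[m] y) :=
    fun m => lipLower_iter_mul_le hlb1 hl1p m
  have hu_mul : ∀ m (x y : EuclideanSpace ℝ (Fin d)),
      dist ((L 1)^[m] x) ((L 1)^[m] y) ≤ u m * dist x y :=
    fun m => lipUpper_iter_le_mul hub1 hr1p.le m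
  have hvpos : ∀ m, 0 < v m := lipLower_iter_pos hlb1 hl1p htp
  have huK : ∀ m, u m ≤ K' * v m := by
    intro m
    have := hBDP (List.replicate m 1)
    rwa [wordMap_replicate] at this
  have hvl : ∀ m, l 1 * v m ≤ v (m + 1) := fun m => lipLower_iter_succ_ge hlb1 hl1p htp m
  have hvr : ∀ m, v (m + 1) ≤ r 1 * v m := fun m =>
    lipLower_iter_succ_le hlb1 hl1p hub1 hr1p htp m
  have hkey : ∀ k (y y' : EuclideanSpace ℝ (Fin d)), y ∈ A → y' ∈ A → D ≤ dist y y' →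
      v k * D ≤ dist ((L 1)^[k] y) ((L 1)^[k] y') ∧
        dist ((L 1)^[k] y) ((L 1)^[k] y') ≤ u k * Δ := by
    intro k y y' hy hy' hDd
    have hupos : 0 ≤ u k := by
      have h1 := hv_mul k (L 0 a0) (L 1 a0)
      have h2 := hu_mul k (L 0 a0) (L 1 a0)
      have h3 : 0 < dist (L 0 a0) (L 1 a0) := dist_pos.mpr hz01
      nlinarith [hvpos k, dist_nonneg (x := (L 1)^[k] (L 0 a0)) (y := (L 1)^[k] (L 1 a0))]
    constructor
    · calc v k * D ≤ v k * dist y y' := mul_le_mul_of_nonneg_left hDd (hvpos k).le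
      _ ≤ _ := hv_mul k y y'
    · calc dist ((L 1)^[k] y) ((L 1)^[k] y') ≤ u k * dist y y' := hu_mul k y y'
      _ ≤ u k * Δ := mul_le_mul_of_nonneg_left (hΔ y hy y' hy') hupos
  -- constants for the shift map σ
  set cσ : ℝ := min (1 / r 1) (min 1 (D / (K' * Δ))) with hcσdef
  set Cσ : ℝ := max (1 / l 1) (max 1 (K' * Δ / (l 1 * D))) with hCσdef
  have hcσp : 0 < cσ := lt_min (by positivity) (lt_min one_pos (by positivity))
  have hCσp : 0 < Cσ := lt_of_lt_of_le one_pos (le_trans (le_max_left _ _) (le_max_right _ _))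
  have hcσ3 : cσ * (K' * Δ) ≤ D := by
    have h3 : cσ ≤ D / (K' * Δ) := le_trans (min_le_right _ _) (min_le_right _ _)
    rw [← le_div_iff₀ (by positivity)]
    exact h3
  have hCσ3 : K' * Δ ≤ Cσ * (l 1 * D) := by
    have h3 : K' * Δ / (l 1 * D) ≤ Cσ := le_trans (le_max_right _ _) (le_max_right _ _)
    exact (div_le_iff₀ (by positivity)).mp h3
  have hCσ2 : K' * Δ ≤ Cσ * D :=
    hCσ3.trans (mul_le_mul_of_nonneg_left (mul_le_of_le_one_left hDp.le hl1lt.le) hCσp.le)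
  -- the two algebraic lemmas combining the estimates
  have algebra0 : ∀ k (dxx dσ : ℝ), v k * D ≤ dxx → dxx ≤ u k * Δ → v k * D ≤ dσ →
      dσ ≤ u k * Δ → cσ * dxx ≤ dσ ∧ dσ ≤ Cσ * dxx := by
    intro k dxx dσ hv1 hu1 hv2 hu2
    constructor
    · calc cσ * dxx ≤ cσ * (u k * Δ) := mul_le_mul_of_nonneg_left hu1 hcσp.le
      _ ≤ cσ * (K' * v k * Δ) :=
          mul_le_mul_of_nonneg_left (mul_le_mul_of_nonneg_right (huK k) hΔp.le) hcσp.le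
      _ = cσ * (K' * Δ) * v k := by ring
      _ ≤ D * v k := mul_le_mul_of_nonneg_right hcσ3 (hvpos k).le
      _ = v k * D := by ring
      _ ≤ dσ := hv2
    · calc dσ ≤ u k * Δ := hu2
      _ ≤ K' * v k * Δ := mul_le_mul_of_nonneg_right (huK k) hΔp.le
      _ = K' * Δ * v k := by ring
      _ ≤ Cσ * D * v k := mul_le_mul_of_nonneg_right hCσ2 (hvpos k).le
      _ = Cσ * (v k * D) := by ring
      _ ≤ Cσ * dxx := mul_le_mul_of_nonneg_left hv1 hCσp.le
  have algebra1 : ∀ k (dxx dσ : ℝ), v (k + 1) * D ≤ dxx → dxx ≤ u (k + 1) * Δ →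
      v k * D ≤ dσ → dσ ≤ u k * Δ → cσ * dxx ≤ dσ ∧ dσ ≤ Cσ * dxx := by
    intro k dxx dσ hv1 hu1 hv2 hu2
    constructor
    · calc cσ * dxx ≤ cσ * (u (k + 1) * Δ) := mul_le_mul_of_nonneg_left hu1 hcσp.le
      _ ≤ cσ * (K' * v (k + 1) * Δ) :=
          mul_le_mul_of_nonneg_left (mul_le_mul_of_nonneg_right (huK (k + 1)) hΔp.le) hcσp.le
      _ ≤ cσ * (K' * (r 1 * v k) * Δ) := by
          refine mul_le_mul_of_nonneg_left ?_ hcσp.le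
          refine mul_le_mul_of_nonneg_right ?_ hΔp.le
          exact mul_le_mul_of_nonneg_left (hvr k) hK'.le
      _ = cσ * (K' * Δ) * (r 1 * v k) := by ring
      _ ≤ D * (r 1 * v k) :=
          mul_le_mul_of_nonneg_right hcσ3 (mul_nonneg hr1p.le (hvpos k).le)
      _ ≤ D * v k :=
          mul_le_mul_of_nonneg_left (mul_le_of_le_one_left (hvpos k).le hr1lt.le) hDp.le
      _ = v k * D := by ring
      _ ≤ dσ := hv2
    · calc dσ ≤ u k * Δ := hu2
      _ ≤ K' * v k * Δ := mul_le_mul_of_nonneg_right (huK k) hΔp.le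
      _ = K' * Δ * v k := by ring
      _ ≤ Cσ * (l 1 * D) * v k := mul_le_mul_of_nonneg_right hCσ3 (hvpos k).le
      _ = Cσ * (l 1 * v k * D) := by ring
      _ ≤ Cσ * (v (k + 1) * D) := by
          refine mul_le_mul_of_nonneg_left ?_ hCσp.le
          exact mul_le_mul_of_nonneg_right (hvl k) hDp.le
      _ ≤ Cσ * dxx := mul_le_mul_of_nonneg_left hv1 hCσp.le
  -- the hard mixed estimate
  have hmix : ∀ x ∈ Ap, ∀ x' ∈ Cs,
      cσ * dist x x' ≤ dist (σ x) x' ∧ dist (σ x) x' ≤ Cσ * dist x x' := by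
    intro x hx x' hx'
    obtain ⟨p, hm⟩ := Set.mem_iUnion.mp hx
    obtain ⟨w, ⟨a, ha, rfl⟩, rfl⟩ := hm
    have hL0aA : L 0 a ∈ L 0 '' A := ⟨a, ha, rfl⟩
    rw [hσT p a ha]
    rw [hCsdef] at hx'
    rcases hx' with hx' | hx'
    · obtain ⟨m, hm'⟩ := Set.mem_iUnion.mp hx'
      obtain ⟨c, hc, rfl⟩ := hm'
      rcases le_or_gt m p with hmp | hpm
      · -- m ≤ p : same-exponent case
        have hxeq : (L 1)^[p + 1] (L 0 a) = (L 1)^[m] ((L 1)^[p + 1 - m] (L 0 a)) := by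
          rw [← Function.iterate_add_apply]
          congr 1
          omega
        have hσxeq : (L 1)^[p] (L 0 a) = (L 1)^[m] ((L 1)^[p - m] (L 0 a)) := by
          rw [← Function.iterate_add_apply]
          congr 1
          omega
        have hy1 : (L 1)^[p + 1 - m] (L 0 a) ∈ L 1 '' A := by
          have he : p + 1 - m = (p - m) + 1 := by omega
          rw [he, Function.iterate_succ_apply']
          exact ⟨_, hiterA _ _ (hL0A hL0aA), rfl⟩
        have hgap1 : D ≤ dist ((L 1)^[p + 1 - m] (L 0 a)) c := hD1C _ hy1 c hc
        have hb1 := hkey m _ c (hL1A hy1) (hCA hc) hgap1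
        have hgap2 : D ≤ dist ((L 1)^[p - m] (L 0 a)) c := by
          rcases Nat.eq_zero_or_pos (p - m) with he | he
          · rw [he]
            simpa using hD0C _ hL0aA c hc
          · obtain ⟨j, hj⟩ := Nat.exists_eq_succ_of_ne_zero he.ne'
            have hy2 : (L 1)^[p - m] (L 0 a) ∈ L 1 '' A := by
              rw [hj, Function.iterate_succ_apply']
              exact ⟨_, hiterA _ _ (hL0A hL0aA), rfl⟩
            exact hD1C _ hy2 c hc
        have hb2 := hkey m _ c (hiterA _ _ (hL0A hL0aA)) (hCA hc) hgap2
        rw [hxeq, hσxeq]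
        exact algebra0 m _ _ hb1.1 hb1.2 hb2.1 hb2.2
      · -- p < m : off-by-one case
        have hxeq : (L 1)^[m] c = (L 1)^[p + 1] ((L 1)^[m - (p + 1)] c) := by
          rw [← Function.iterate_add_apply]
          congr 1
          omega
        have hσxeq : (L 1)^[m] c = (L 1)^[p] ((L 1)^[m - p] c) := by
          rw [← Function.iterate_add_apply]
          congr 1
          omega
        have hgap1 : D ≤ dist (L 0 a) ((L 1)^[m - (p + 1)] c) := by
          rcases Nat.eq_zero_or_pos (m - (p + 1)) with he | he
          · rw [he]
            simpa using hD0C _ hL0aA c hc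
          · obtain ⟨j, hj⟩ := Nat.exists_eq_succ_of_ne_zero he.ne'
            have hy2 : (L 1)^[m - (p + 1)] c ∈ L 1 '' A := by
              rw [hj, Function.iterate_succ_apply']
              exact ⟨_, hiterA _ _ (hCA hc), rfl⟩
            exact hD01 _ hL0aA _ hy2
        have hb1 := hkey (p + 1) (L 0 a) _ (hL0A hL0aA) (hiterA _ _ (hCA hc)) hgap1
        have hgap2 : D ≤ dist (L 0 a) ((L 1)^[m - p] c) := by
          have he : m - p = (m - (p + 1)) + 1 := by omega
          have hy2 : (L 1)^[m - p] c ∈ L 1 '' A := by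
            rw [he, Function.iterate_succ_apply']
            exact ⟨_, hiterA _ _ (hCA hc), rfl⟩
          exact hD01 _ hL0aA _ hy2
        have hb2 := hkey p (L 0 a) _ (hL0A hL0aA) (hiterA _ _ (hCA hc)) hgap2
        have hres := algebra1 p _ _ hb1.1 hb1.2 hb2.1 hb2.2
        rwa [← hxeq, ← hσxeq] at hres
    · -- x' = t
      rw [Set.mem_singleton_iff] at hx'
      subst hx'
      have hgap : D ≤ dist (L 0 a) t := hD01 _ hL0aA t ht1
      have e1 : dist ((L 1)^[p + 1] (L 0 a)) t =
          dist ((L 1)^[p + 1] (L 0 a)) ((L 1)^[p + 1] t) := by rw [ht_iter]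
      have e2 : dist ((L 1)^[p] (L 0 a)) t =
          dist ((L 1)^[p] (L 0 a)) ((L 1)^[p] t) := by rw [ht_iter]
      have hb1 := hkey (p + 1) (L 0 a) t (hL0A hL0aA) htA hgap
      have hb2 := hkey p (L 0 a) t (hL0A hL0aA) htA hgap
      rw [e1, e2]
      exact algebra1 p _ _ hb1.1 hb1.2 hb2.1 hb2.2
  have hσbd : ∀ x ∈ Ap ∪ Cs, ∀ x' ∈ Ap ∪ Cs,
      cσ * dist x x' ≤ dist (σ x) (σ x') ∧ dist (σ x) (σ x') ≤ Cσ * dist x x' := by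
    have hcσ1 : cσ * r 1 ≤ 1 := by
      have h3 : cσ ≤ 1 / r 1 := min_le_left _ _
      calc cσ * r 1 ≤ (1 / r 1) * r 1 := mul_le_mul_of_nonneg_right h3 hr1p.le
      _ = 1 := by field_simp
    have hCσ1 : 1 ≤ Cσ * l 1 := by
      have h3 : 1 / l 1 ≤ Cσ := le_max_left _ _
      calc (1:ℝ) = (1 / l 1) * l 1 := by field_simp
      _ ≤ Cσ * l 1 := mul_le_mul_of_nonneg_right h3 hl1p.le
    have hcσle1 : cσ ≤ 1 := le_trans (min_le_right _ _) (min_le_left _ _)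
    have hCσge1 : 1 ≤ Cσ := le_trans (le_max_left _ _) (le_max_right _ _)
    intro x hx x' hx'
    rcases hx with hxa | hxc
    · rcases hx' with hxa' | hxc'
      · obtain ⟨m1, hm1, he1⟩ := hσApA x hxa
        obtain ⟨m2, hm2, he2⟩ := hσApA x' hxa'
        have hup : dist x x' ≤ r 1 * dist (σ x) (σ x') := by
          calc dist x x' = dist (L 1 (σ x)) (L 1 (σ x')) := by rw [← he1, ← he2]
          _ ≤ r 1 * dist (σ x) (σ x') := hub1 _ _
        have hlo : l 1 * dist (σ x) (σ x') ≤ dist x x' := by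
          calc l 1 * dist (σ x) (σ x') ≤ dist (L 1 (σ x)) (L 1 (σ x')) := hlb1 _ _
          _ = dist x x' := by rw [← he1, ← he2]
        constructor
        · calc cσ * dist x x' ≤ cσ * (r 1 * dist (σ x) (σ x')) :=
              mul_le_mul_of_nonneg_left hup hcσp.le
          _ = (cσ * r 1) * dist (σ x) (σ x') := by ring
          _ ≤ 1 * dist (σ x) (σ x') := mul_le_mul_of_nonneg_right hcσ1 dist_nonneg
          _ = dist (σ x) (σ x') := one_mul _
        · calc dist (σ x) (σ x') = 1 * dist (σ x) (σ x') := (one_mul _).symm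
          _ ≤ (Cσ * l 1) * dist (σ x) (σ x') := mul_le_mul_of_nonneg_right hCσ1 dist_nonneg
          _ = Cσ * (l 1 * dist (σ x) (σ x')) := by ring
          _ ≤ Cσ * dist x x' := mul_le_mul_of_nonneg_left hlo hCσp.le
      · rw [hσCs x' hxc']
        exact hmix x hxa x' hxc'
    · rcases hx' with hxa' | hxc'
      · rw [hσCs x hxc, dist_comm x x', dist_comm x (σ x')]
        exact hmix x' hxa' x hxc
      · rw [hσCs x hxc, hσCs x' hxc']
        constructor
        · calc cσ * dist x x' ≤ 1 * dist x x' := mul_le_mul_of_nonneg_right hcσle1 dist_nonneg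
          _ = dist x x' := one_mul _
        · calc dist x x' = 1 * dist x x' := (one_mul _).symm
          _ ≤ Cσ * dist x x' := mul_le_mul_of_nonneg_right hCσge1 dist_nonneg
  have hRest1 : ∀ x ∈ Ap ∪ Cs, x ∈ L 1 '' A ∪ C := by
    rintro x (hx | hx)
    · exact Or.inl (hApsub1 hx)
    · rw [hCsdef] at hx
      rcases hx with hx | hx
      · obtain ⟨m, hm⟩ := Set.mem_iUnion.mp hx
        cases m with
        | zero =>
          right
          rw [hUdef] at hm
          simpa using hm
        | succ j => exact Or.inl (hUsub1 j hm)
      · rw [Set.mem_singleton_iff] at hx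
        exact Or.inl (hx ▸ ht1)
  have hmem2 : ∀ x ∈ A, x ∉ T 0 → x ∈ Ap ∪ Cs := by
    intro x hx h0
    rcases hcover x hx with h | h | h
    · exact absurd h h0
    · exact Or.inl h
    · exact Or.inr h
  -- the bi-Lipschitz estimates
  have hmain : ∃ c C₀ : ℝ, 0 < c ∧ 0 < C₀ ∧ ∀ x ∈ A, ∀ x' ∈ A,
      c * dist x x' ≤ dist (g x) (g x') ∧ dist (g x) (g x') ≤ C₀ * dist x x' := by
    set cg : ℝ := min (l' 0 / r 0) (min (E' / Δ) (l' 1 * cσ)) with hcgdef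
    set Cg : ℝ := max (r' 0 / l 0) (max (Δ' / D) (r' 1 * Cσ)) with hCgdef
    have hcgp : 0 < cg :=
      lt_min (div_pos hl'0p hr0p) (lt_min (div_pos hE'p hΔp) (mul_pos hl'1p hcσp))
    have hCgp : 0 < Cg := lt_of_lt_of_le (div_pos hr'0p hl0p) (le_max_left _ _)
    refine ⟨cg, Cg, hcgp, hCgp, ?_⟩
    have hcross : ∀ a ∈ A, ∀ x' ∈ A, x' ∉ T 0 →
        cg * dist (L 0 a) x' ≤ dist (g (L 0 a)) (g x') ∧
          dist (g (L 0 a)) (g x') ≤ Cg * dist (L 0 a) x' := by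
      intro a ha x' hx' h2
      obtain ⟨hσmem, hgeq⟩ := hσA x' hx' h2
      have hg1 : g (L 0 a) ∈ S 0 '' A := by rw [hgT0 a ha]; exact ⟨a, ha, rfl⟩
      have hg2 : g x' ∈ S 1 '' A := by rw [hgeq]; exact ⟨σ x', hσmem, rfl⟩
      have hlow : E' ≤ dist (g (L 0 a)) (g x') := hE' _ hg1 _ hg2
      have hup : dist (g (L 0 a)) (g x') ≤ Δ' :=
        hΔ' _ (Set.mem_union_left _ hg1) _ (Set.mem_union_right _ hg2)
      have hdl : D ≤ dist (L 0 a) x' := by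
        rcases hRest1 x' (hmem2 x' hx' h2) with h | h
        · exact hD01 _ ⟨a, ha, rfl⟩ _ h
        · exact hD0C _ ⟨a, ha, rfl⟩ _ h
      have hdu : dist (L 0 a) x' ≤ Δ := hΔ _ (hL0A ⟨a, ha, rfl⟩) _ hx'
      constructor
      · have h3 : cg ≤ E' / Δ := le_trans (min_le_right _ _) (min_le_left _ _)
        have h4 : cg * Δ ≤ E' := by
          calc cg * Δ ≤ (E' / Δ) * Δ := mul_le_mul_of_nonneg_right h3 hΔp.le
          _ = E' := by field_simp
        calc cg * dist (L 0 a) x' ≤ cg * Δ := mul_le_mul_of_nonneg_left hdu hcgp.le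
        _ ≤ E' := h4
        _ ≤ _ := hlow
      · have h3 : Δ' / D ≤ Cg := le_trans (le_max_left _ _) (le_max_right _ _)
        have h4 : Δ' ≤ Cg * D := by
          calc Δ' = (Δ' / D) * D := by field_simp
          _ ≤ Cg * D := mul_le_mul_of_nonneg_right h3 hDp.le
        calc dist (g (L 0 a)) (g x') ≤ Δ' := hup
        _ ≤ Cg * D := h4
        _ ≤ Cg * dist (L 0 a) x' := mul_le_mul_of_nonneg_left hdl hCgp.le
    intro x hx x' hx'
    by_cases h1 : x ∈ T 0 <;> by_cases h2 : x' ∈ T 0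
    · rw [hT0eq] at h1 h2
      obtain ⟨a, ha, rfl⟩ := h1
      obtain ⟨a', ha', rfl⟩ := h2
      rw [hgT0 a ha, hgT0 a' ha']
      have hS := hSbiLip 0 a a'
      have hL := hLbiLip 0 a a'
      constructor
      · have h3 : cg ≤ l' 0 / r 0 := min_le_left _ _
        have h4 : cg * r 0 ≤ l' 0 := by
          calc cg * r 0 ≤ (l' 0 / r 0) * r 0 := mul_le_mul_of_nonneg_right h3 hr0p.le
          _ = l' 0 := by field_simp
        calc cg * dist (L 0 a) (L 0 a') ≤ cg * (r 0 * dist a a') :=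
            mul_le_mul_of_nonneg_left hL.2 hcgp.le
        _ = (cg * r 0) * dist a a' := by ring
        _ ≤ l' 0 * dist a a' := mul_le_mul_of_nonneg_right h4 dist_nonneg
        _ ≤ dist (S 0 a) (S 0 a') := hS.1
      · have h3 : r' 0 / l 0 ≤ Cg := le_max_left _ _
        have h4 : r' 0 ≤ Cg * l 0 := by
          calc r' 0 = (r' 0 / l 0) * l 0 := by field_simp
          _ ≤ Cg * l 0 := mul_le_mul_of_nonneg_right h3 hl0p.le
        calc dist (S 0 a) (S 0 a') ≤ r' 0 * dist a a' := hS.2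
        _ ≤ (Cg * l 0) * dist a a' := mul_le_mul_of_nonneg_right h4 dist_nonneg
        _ = Cg * (l 0 * dist a a') := by ring
        _ ≤ Cg * dist (L 0 a) (L 0 a') := mul_le_mul_of_nonneg_left hL.1 hCgp.le
    · rw [hT0eq] at h1
      obtain ⟨a, ha, rfl⟩ := h1
      exact hcross a ha x' hx' h2
    · rw [hT0eq] at h2
      obtain ⟨a, ha, rfl⟩ := h2
      have h5 := hcross a ha x hx h1
      rw [dist_comm x (L 0 a), dist_comm (g x) (g (L 0 a))]
      exact h5
    · obtain ⟨hσ1, hg1⟩ := hσA x hx h1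
      obtain ⟨hσ2, hg2⟩ := hσA x' hx' h2
      have hσb := hσbd x (hmem2 x hx h1) x' (hmem2 x' hx' h2)
      rw [hg1, hg2]
      have hS := hSbiLip 1 (σ x) (σ x')
      constructor
      · have h3 : cg ≤ l' 1 * cσ := le_trans (min_le_right _ _) (min_le_right _ _)
        calc cg * dist x x' ≤ (l' 1 * cσ) * dist x x' :=
            mul_le_mul_of_nonneg_right h3 dist_nonneg
        _ = l' 1 * (cσ * dist x x') := by ring
        _ ≤ l' 1 * dist (σ x) (σ x') := mul_le_mul_of_nonneg_left hσb.1 hl'1p.le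
        _ ≤ dist (S 1 (σ x)) (S 1 (σ x')) := hS.1
      · have h3 : r' 1 * Cσ ≤ Cg := le_trans (le_max_right _ _) (le_max_right _ _)
        calc dist (S 1 (σ x)) (S 1 (σ x')) ≤ r' 1 * dist (σ x) (σ x') := hS.2
        _ ≤ r' 1 * (Cσ * dist x x') := mul_le_mul_of_nonneg_left hσb.2 hr'1p.le
        _ = (r' 1 * Cσ) * dist x x' := by ring
        _ ≤ Cg * dist x x' := mul_le_mul_of_nonneg_right h3 dist_nonneg

  obtain ⟨c, C₀, hcp, hC₀p, hcC⟩ := hmain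
  refine ⟨hbij.equiv g, (hbij.equiv g).bijective, c, C₀, hcp, ?_, ?_⟩
  · -- c ≤ C₀
    have h1 := hcC _ (hL0A hz0) _ (hL1A hz1)
    have hd : 0 < dist (L 0 a0) (L 1 a0) := dist_pos.mpr hz01
    nlinarith [h1.1.trans h1.2]
  · intro x x'
    have hco : ∀ y : A, ((hbij.equiv g) y : EuclideanSpace ℝ (Fin d)) = g (y : EuclideanSpace ℝ (Fin d)) := fun y => rfl
    rw [Subtype.dist_eq, Subtype.dist_eq, hco, hco]
    exact hcC _ x.2 _ x'.2
end
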